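/- arXiv:1203.6169 — 8 statements merged into one kernel-verified Lean document; each statement's English description precedes it below -/
import Mathlib

section
/- Let X be a bounded geometry metric space. Then the following two conditions are equivalent: (1) for all R, ε > 0 there exists S > 0 such that for every probability measure μ on X there exists a finitely supported function φ ∈ ℓ¹(X) with diam(supp(φ)) ≤ S and ∑_{x ∈ supp(μ)} μ(x) · ∑_{y ∈ supp(μ), d(x,y) ≤ R} |φ(x) − φ(y)| < ε · ∑_{x ∈ supp(μ)} μ(x)·|φ(x)|; (2) for all R, ε > 0 there exists S > 0 such that for every probability measure μ on X there exists a finite subset E ⊆ X with diam(E) ≤ S and μ(∂_R E) < ε · μ(E). -/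
/-- `N_R(E)`, the `R`-neighbourhood of `E`. -/
def nbhd {X : Type*} [MetricSpace X] (R : ℝ) (E : Set X) : Set X :=
  {y | ∃ e ∈ E, dist y e ≤ R}

/-- `∂_R E = N_R(E) \ E`. -/
def bdry {X : Type*} [MetricSpace X] (R : ℝ) (E : Set X) : Set X :=
  nbhd R E \ E

def BoundedGeometry (X : Type*) [MetricSpace X] : Prop :=
  ∀ R : ℝ, 0 < R → ∃ N : ℕ, ∀ x : X,
    {y | dist x y ≤ R}.Finite ∧ {y | dist x y ≤ R}.ncard ≤ N

/-- A probability measure on `X`, as a function. -/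
def IsProbFn {X : Type*} (μ : X → ℝ) : Prop :=
  (∀ x, 0 ≤ μ x) ∧ Summable μ ∧ ∑' x, μ x = 1

/-- `μ(E)`. -/
noncomputable def measOf {X : Type*} (μ : X → ℝ) (E : Set X) : ℝ := ∑' x : E, μ x

/-- Uniform local amenability. -/
def ULA (X : Type*) [MetricSpace X] : Prop :=
  ∀ R : ℝ, 0 < R → ∀ ε : ℝ, 0 < ε → ∃ S : ℝ, 0 < S ∧
    ∀ F : Set X, F.Finite → ∃ E : Set X, E.Finite ∧
      EMetric.diam E ≤ ENNReal.ofReal S ∧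
      ((bdry R E ∩ F).ncard : ℝ) < ε * ((E ∩ F).ncard : ℝ)

/-- Measured uniform local amenability. -/
def ULAmu (X : Type*) [MetricSpace X] : Prop :=
  ∀ R : ℝ, 0 < R → ∀ ε : ℝ, 0 < ε → ∃ S : ℝ, 0 < S ∧
    ∀ μ : X → ℝ, IsProbFn μ → ∃ E : Set X, E.Finite ∧
      EMetric.diam E ≤ ENNReal.ofReal S ∧
      measOf μ (bdry R E) < ε * measOf μ E

def CoarseEmbedding {X Y : Type*} [MetricSpace X] [MetricSpace Y] (f : X → Y) : Prop :=
  ∃ ρm ρp : ℝ → ℝ, Monotone ρm ∧ Monotone ρp ∧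
    Filter.Tendsto ρm Filter.atTop Filter.atTop ∧
    ∀ x₁ x₂ : X, ρm (dist x₁ x₂) ≤ dist (f x₁) (f x₂) ∧
      dist (f x₁) (f x₂) ≤ ρp (dist x₁ x₂)

/-!
(2) ⇒ (1): if `E` is a Følner set at scale `c + R`, the truncated distance function
`φ = max (c - d(·, E)) 0` is `1`-Lipschitz, equals `c` on `E` and lives in the `c`-neighbourhood
of `E`. Bounded geometry bounds its `R`-variation by `N R μ(N_{c+R} E) < 2 N R μ(E)`, while its
weighted `ℓ¹`-norm is at least `c μ(E)`; take `c = 2 (N + 1) R / ε`.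

(1) ⇒ (2): a discrete coarea inequality. For `ψ = |φ|` on `supp μ`, the weighted `ℓ¹`-norm is
`∫₀^∞ μ{ψ > t} dt` while the variation dominates `∫₀^∞ μ(∂_R {ψ > t}) dt`, so some superlevel set
`{ψ > t} ⊆ supp φ` is Følner. The integrals are finite sums: peel off the lowest positive level `m`
of `ψ`, replacing `ψ` by `max (ψ - m) 0`, which has smaller support.
-/

open Function Finset
open scoped Classical

section Coarea

variable {X : Type*} (s : Finset X) (Γ : X → Finset X) {μ : X → ℝ}

lemma eq_max_sub_add_ite {a m : ℝ} (ha : 0 ≤ a) (hm : 0 ≤ m) (hma : 0 < a → m ≤ a) :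
    a = max (a - m) 0 + if 0 < a then m else 0 := by
  split_ifs with h
  · rw [max_eq_left (by linarith [hma h])]; ring
  · rw [max_eq_right (by linarith)]; linarith

lemma lt_max_sub_iff {a m t : ℝ} (ht : 0 ≤ t) : t < max (a - m) 0 ↔ t + m < a := by
  rw [lt_max_iff]
  constructor
  · rintro (h | h) <;> linarith
  · intro h; left; linarith

lemma abs_sub_eq_abs_max_sub_add {a b m : ℝ} (ha : a = 0) (hm : 0 ≤ m) (hmb : m ≤ b) :
    |a - b| = |max (a - m) 0 - max (b - m) 0| + m := by
  subst ha
  rw [max_eq_right (by linarith), max_eq_left (by linarith), abs_of_nonpos (by linarith),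
    abs_of_nonpos (by linarith)]
  ring

lemma sum_abs_sub_max_sub_add_le (hμ : ∀ x, 0 ≤ μ x) {ψ : X → ℝ} (hψ : ∀ x, 0 ≤ ψ x) {m : ℝ}
    (hm : 0 ≤ m) (hmψ : ∀ x, 0 < ψ x → m ≤ ψ x) :
    ∑ x ∈ s, μ x * ∑ y ∈ Γ x, |max (ψ x - m) 0 - max (ψ y - m) 0|
        + m * ∑ x ∈ s with ψ x ≤ 0 ∧ ∃ y ∈ Γ x, 0 < ψ y, μ x
      ≤ ∑ x ∈ s, μ x * ∑ y ∈ Γ x, |ψ x - ψ y| := by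
  rw [sum_filter, mul_sum, ← sum_add_distrib]
  refine sum_le_sum fun x _ => ?_
  have hlip : ∀ y, |max (ψ x - m) 0 - max (ψ y - m) 0| ≤ |ψ x - ψ y| := fun y =>
    (abs_max_sub_max_le_abs _ _ _).trans_eq (by rw [sub_sub_sub_cancel_right])
  split_ifs with hx
  · obtain ⟨hx0, y₀, hy₀, hψy₀⟩ := hx
    rw [mul_comm m, ← mul_add, ← add_sum_erase _ _ hy₀, ← add_sum_erase _ _ hy₀,
      abs_sub_eq_abs_max_sub_add (le_antisymm hx0 (hψ x)) hm (hmψ y₀ hψy₀), add_right_comm]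
    exact mul_le_mul_of_nonneg_left (add_le_add le_rfl (sum_le_sum fun y _ => hlip y)) (hμ x)
  · rw [mul_zero, add_zero]
    exact mul_le_mul_of_nonneg_left (sum_le_sum fun y _ => hlip y) (hμ x)

/-- Discrete coarea inequality: `{x ∈ s | ψ x ≤ t ∧ ∃ y ∈ Γ x, t < ψ y}` is the outer boundary of
the superlevel set `{t < ψ}` in the graph `Γ`. -/
theorem coarea_le (hμ : ∀ x, 0 ≤ μ x) {ε : ℝ} (T : Finset X) (ψ : X → ℝ) (hψ : ∀ x, 0 ≤ ψ x)
    (hT : support ψ ⊆ T)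
    (hlevel : ∀ t, 0 ≤ t → ε * ∑ x ∈ s with t < ψ x, μ x
      ≤ ∑ x ∈ s with ψ x ≤ t ∧ ∃ y ∈ Γ x, t < ψ y, μ x) :
    ε * ∑ x ∈ s, μ x * ψ x ≤ ∑ x ∈ s, μ x * ∑ y ∈ Γ x, |ψ x - ψ y| := by
  induction T using Finset.strongInduction generalizing ψ with
  | H T ih =>
  rcases (T.filter (0 < ψ ·)).eq_empty_or_nonempty with hempty | hne
  · have hzero : ∀ x, ψ x = 0 := fun x => by
      by_contra hx
      exact filter_eq_empty_iff.1 hempty (hT hx) ((hψ x).lt_of_ne' hx)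
    simp [hzero]
  obtain ⟨x₀, hx₀, hmin⟩ := exists_min_image _ ψ hne
  rw [mem_filter] at hx₀
  set m := ψ x₀
  have hm : 0 < m := hx₀.2
  have hmψ : ∀ x, 0 < ψ x → m ≤ ψ x := fun x hx => hmin x (mem_filter.2 ⟨hT hx.ne', hx⟩)
  have hsupp : support (fun x => max (ψ x - m) 0) ⊆ T.erase x₀ := by
    intro x hx
    have hlt : m < ψ x := by
      by_contra! h
      exact hx (max_eq_right (by linarith))
    exact mem_erase.2 ⟨by rintro rfl; exact lt_irrefl _ hlt, hT (hm.trans hlt).ne'⟩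
  have ih' := ih (T.erase x₀) (erase_ssubset hx₀.1) (fun x => max (ψ x - m) 0)
    (fun x => le_max_right _ _) hsupp fun t ht => by
      simpa only [← not_lt, lt_max_sub_iff ht] using hlevel (t + m) (by positivity)
  have hsplit : ∑ x ∈ s, μ x * ψ x
      = ∑ x ∈ s, μ x * max (ψ x - m) 0 + m * ∑ x ∈ s with 0 < ψ x, μ x := by
    rw [sum_filter, mul_sum, ← sum_add_distrib]
    refine sum_congr rfl fun x _ => ?_
    conv_lhs => rw [eq_max_sub_add_ite (hψ x) hm.le (hmψ x)]
    split_ifs <;> ring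
  calc ε * ∑ x ∈ s, μ x * ψ x
      = ε * ∑ x ∈ s, μ x * max (ψ x - m) 0 + m * (ε * ∑ x ∈ s with 0 < ψ x, μ x) := by
        rw [hsplit]; ring
    _ ≤ ∑ x ∈ s, μ x * ∑ y ∈ Γ x, |max (ψ x - m) 0 - max (ψ y - m) 0|
          + m * ∑ x ∈ s with ψ x ≤ 0 ∧ ∃ y ∈ Γ x, 0 < ψ y, μ x :=
        add_le_add ih' (mul_le_mul_of_nonneg_left (hlevel 0 le_rfl) hm.le)
    _ ≤ ∑ x ∈ s, μ x * ∑ y ∈ Γ x, |ψ x - ψ y| :=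
        sum_abs_sub_max_sub_add_le s Γ hμ hψ hm.le hmψ

end Coarea

section Measures

variable {X : Type*}

lemma tsum_subtype_eq_sum_filter {A : Set X} {f : X → ℝ} {s : Finset X}
    (h : A ∩ support f ⊆ s) : ∑' x : A, f x = ∑ x ∈ s with x ∈ A, f x := by
  rw [_root_.tsum_subtype, tsum_eq_sum' (by rwa [Set.support_indicator]), sum_filter]
  rfl

lemma tsum_support_mul_eq_sum {μ g : X → ℝ} {s : Finset X}
    (h : ∀ x, μ x ≠ 0 → g x ≠ 0 → x ∈ s) :
    ∑' x : support μ, μ x * g x = ∑ x ∈ s, μ x * g x := by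
  rw [tsum_subtype_eq_of_support_subset (support_mul_subset_left μ g)]
  exact tsum_eq_sum' fun x hx => h x (left_ne_zero_of_mul hx) (right_ne_zero_of_mul hx)

lemma measOf_eq_sum_filter {μ : X → ℝ} {A : Set X} {s : Finset X} (h : A ∩ support μ ⊆ s) :
    measOf μ A = ∑ x ∈ s with x ∈ A, μ x :=
  tsum_subtype_eq_sum_filter h

lemma measOf_nonneg {μ : X → ℝ} (hμ : ∀ x, 0 ≤ μ x) (A : Set X) : 0 ≤ measOf μ A :=
  tsum_nonneg fun x => hμ x

lemma measOf_union {μ : X → ℝ} (hμ : Summable μ) {A B : Set X} (hAB : Disjoint A B) :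
    measOf μ (A ∪ B) = measOf μ A + measOf μ B :=
  Summable.tsum_union_disjoint hAB (hμ.subtype A) (hμ.subtype B)

noncomputable def weightedL1 (μ φ : X → ℝ) : ℝ := ∑' x : support μ, μ x * |φ (x : X)|

lemma weightedL1_eq_sum {μ φ : X → ℝ} {s : Finset X} (hs : support μ ∩ support φ ⊆ s) :
    weightedL1 μ φ = ∑ x ∈ s, μ x * |φ x| :=
  tsum_support_mul_eq_sum fun _ hμx hφx => hs ⟨hμx, abs_ne_zero.1 hφx⟩

end Measures

section Neighbourhoods

variable {X : Type*} [MetricSpace X] {r r' : ℝ}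

lemma self_subset_nbhd (hr : 0 ≤ r) (E : Set X) : E ⊆ nbhd r E :=
  fun x hx => ⟨x, hx, by rwa [dist_self]⟩

lemma nbhd_mono {E F : Set X} (hrr' : r ≤ r') (hEF : E ⊆ F) : nbhd r E ⊆ nbhd r' F :=
  fun _ ⟨e, he, hd⟩ => ⟨e, hEF he, hd.trans hrr'⟩

lemma thickening_subset_nbhd (hrr' : r ≤ r') (E : Set X) : Metric.thickening r E ⊆ nbhd r' E :=
  fun _ hx =>
    let ⟨e, he, hd⟩ := Metric.mem_thickening_iff.1 hx
    ⟨e, he, hd.le.trans hrr'⟩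

lemma finite_nbhd {E : Set X} (hball : ∀ x : X, {y | dist x y ≤ r}.Finite) (hE : E.Finite) :
    (nbhd r E).Finite :=
  (hE.biUnion fun e _ => hball e).subset fun y ⟨e, he, hd⟩ =>
    Set.mem_biUnion he (by rwa [Set.mem_setOf_eq, dist_comm])

lemma measOf_nbhd {μ : X → ℝ} (hμ : Summable μ) (hr : 0 ≤ r) (E : Set X) :
    measOf μ (nbhd r E) = measOf μ E + measOf μ (bdry r E) := by
  rw [bdry, ← measOf_union hμ Set.disjoint_sdiff_right,
    Set.union_diff_cancel (self_subset_nbhd hr E)]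

lemma ediam_thickening_le_ofReal {E : Set X} {S c : ℝ} (hS : 0 ≤ S) (hc : 0 ≤ c)
    (hE : Metric.ediam E ≤ ENNReal.ofReal S) :
    Metric.ediam (Metric.thickening c E) ≤ ENNReal.ofReal (S + 2 * c) := by
  have := Metric.ediam_thickening_le (s := E) ⟨c, hc⟩
  rw [ENNReal.ofReal_add hS (by positivity), ENNReal.ofReal_mul zero_le_two, ENNReal.ofReal_ofNat]
  exact this.trans (add_le_add hE (by rw [ENNReal.ofReal_eq_coe_nnreal hc]; rfl))

lemma BoundedGeometry.finite_ball (hbg : BoundedGeometry X) (hr : 0 < r) (x : X) :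
    {y | dist x y ≤ r}.Finite :=
  let ⟨_, hN⟩ := hbg r hr
  (hN x).1

end Neighbourhoods

section Variation

variable {X : Type*} [MetricSpace X] {μ φ : X → ℝ} {R : ℝ}

noncomputable def gradL1 (μ : X → ℝ) (R : ℝ) (φ : X → ℝ) : ℝ :=
  ∑' x : support μ, μ x * ∑' y : {y : X | μ y ≠ 0 ∧ dist (x : X) y ≤ R}, |φ x - φ y|

noncomputable def nbrs (hball : ∀ x : X, {y | dist x y ≤ R}.Finite) (μ : X → ℝ) (x : X) :
    Finset X :=
  {y ∈ (hball x).toFinset | μ y ≠ 0 ∧ dist x y ≤ R}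

lemma mem_nbrs (hball : ∀ x : X, {y | dist x y ≤ R}.Finite) {x y : X} :
    y ∈ nbrs hball μ x ↔ μ y ≠ 0 ∧ dist x y ≤ R := by
  simp only [nbrs, mem_filter, Set.Finite.mem_toFinset, Set.mem_setOf_eq]
  exact and_iff_right_of_imp fun h => h.2

lemma gradL1_eq_sum (hball : ∀ x : X, {y | dist x y ≤ R}.Finite) {s : Finset X}
    (hs : support μ ∩ nbhd R (support φ) ⊆ s) :
    gradL1 μ R φ = ∑ x ∈ s, μ x * ∑ y ∈ nbrs hball μ x, |φ x - φ y| := by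
  have hinner : ∀ x, ∑' y : {y | μ y ≠ 0 ∧ dist x y ≤ R}, |φ x - φ y|
      = ∑ y ∈ nbrs hball μ x, |φ x - φ y| := fun x => by
    unfold nbrs
    -- the two filters differ only in their `Decidable` instances
    convert tsum_subtype_eq_sum_filter (A := {y | μ y ≠ 0 ∧ dist x y ≤ R})
      (f := fun y => |φ x - φ y|) fun y hy => (hball x).mem_toFinset.2 hy.1.2
    rfl
  simp only [gradL1, hinner]
  refine tsum_support_mul_eq_sum (g := fun x => ∑ y ∈ nbrs hball μ x, |φ x - φ y|)
    fun x hμx hx => hs ⟨hμx, ?_⟩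
  obtain ⟨y, hy, hxy⟩ := exists_ne_zero_of_sum_ne_zero hx
  rw [mem_nbrs] at hy
  by_cases hφx : φ x = 0
  · exact ⟨y, fun hφy => hxy (by simp [hφx, hφy]), hy.2⟩
  · exact ⟨x, hφx, by rw [dist_self]; exact dist_nonneg.trans hy.2⟩

theorem exists_bdry_lt_of_gradL1_lt (hμ : ∀ x, 0 ≤ μ x) (hR : 0 ≤ R)
    (hball : ∀ x : X, {y | dist x y ≤ R}.Finite) {ε : ℝ}
    (hφ : (support φ).Finite) (h : gradL1 μ R φ < ε * weightedL1 μ φ) :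
    ∃ E ⊆ support φ, measOf μ (bdry R E) < ε * measOf μ E := by
  by_contra! hE
  set ψ := (support μ).indicator fun x => |φ x|
  have hψ : ∀ x, μ x ≠ 0 → ψ x = |φ x| := fun x hx => Set.indicator_of_mem hx _
  have hψsupp : ∀ x, ψ x ≠ 0 → μ x ≠ 0 ∧ φ x ≠ 0 := fun x hx => by
    simpa using Set.indicator_apply_ne_zero.1 hx
  have hsfin : (support μ ∩ nbhd R (support φ)).Finite := (finite_nbhd hball hφ).inter_of_right _
  set s := hsfin.toFinset
  have hs : support μ ∩ nbhd R (support φ) ⊆ s := fun x hx => hsfin.mem_toFinset.2 hx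
  have hlevel : ∀ t, 0 ≤ t → ε * ∑ x ∈ s with t < ψ x, μ x
      ≤ ∑ x ∈ s with ψ x ≤ t ∧ ∃ y ∈ nbrs hball μ x, t < ψ y, μ x := by
    intro t ht
    have hEt : {x | t < ψ x} ⊆ support φ := fun x hx => (hψsupp x (ht.trans_lt hx).ne').2
    have hmeas : measOf μ {x | t < ψ x} = ∑ x ∈ s with t < ψ x, μ x :=
      measOf_eq_sum_filter fun x hx => hs ⟨hx.2, self_subset_nbhd hR _ (hEt hx.1)⟩
    have hbdry : measOf μ (bdry R {x | t < ψ x})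
        = ∑ x ∈ s with ψ x ≤ t ∧ ∃ y ∈ nbrs hball μ x, t < ψ y, μ x := by
      rw [measOf_eq_sum_filter fun x hx => hs ⟨hx.2, nbhd_mono le_rfl hEt hx.1.1⟩]
      refine sum_congr (filter_congr fun x _ => ?_) fun _ _ => rfl
      simp only [bdry, nbhd, mem_nbrs, Set.mem_diff, Set.mem_setOf_eq, not_lt]
      constructor
      · rintro ⟨⟨y, hy, hxy⟩, hx⟩
        exact ⟨hx, y, ⟨(hψsupp y (ht.trans_lt hy).ne').1, hxy⟩, hy⟩
      · rintro ⟨hx, y, ⟨-, hxy⟩, hy⟩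
        exact ⟨⟨y, hy, hxy⟩, hx⟩
    rw [← hmeas, ← hbdry]
    exact hE _ hEt
  have hcoarea := coarea_le s (nbrs hball μ) hμ hφ.toFinset ψ
    (Set.indicator_nonneg fun _ _ => abs_nonneg _)
    (fun x hx => hφ.mem_toFinset.2 (hψsupp x hx).2) hlevel
  have hweighted : weightedL1 μ φ = ∑ x ∈ s, μ x * ψ x := by
    rw [weightedL1_eq_sum fun x hx => hs ⟨hx.1, self_subset_nbhd hR _ hx.2⟩]
    exact sum_congr rfl fun x hx => by rw [hψ x (hsfin.mem_toFinset.1 hx).1]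
  have hgrad : ∑ x ∈ s, μ x * ∑ y ∈ nbrs hball μ x, |ψ x - ψ y| ≤ gradL1 μ R φ := by
    rw [gradL1_eq_sum hball hs]
    refine sum_le_sum fun x hx => mul_le_mul_of_nonneg_left (sum_le_sum fun y hy => ?_) (hμ x)
    rw [hψ x (hsfin.mem_toFinset.1 hx).1, hψ y ((mem_nbrs hball).1 hy).1]
    exact abs_abs_sub_abs_le_abs_sub _ _
  rw [hweighted] at h
  linarith

theorem exists_gradL1_lt_of_bdry_lt (hμ0 : ∀ x, 0 ≤ μ x) (hμ : Summable μ) (hR : 0 < R) {N : ℕ}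
    (hN : ∀ x : X, {y | dist x y ≤ R}.Finite ∧ {y | dist x y ≤ R}.ncard ≤ N)
    {ε c : ℝ} (hε : 0 < ε) (hc : 2 * (N + 1) * R ≤ ε * c)
    {E : Set X} (hW : (nbhd (c + R) E).Finite) (hEb : measOf μ (bdry (c + R) E) < measOf μ E) :
    ∃ φ : X → ℝ, support φ ⊆ Metric.thickening c E ∧ gradL1 μ R φ < ε * weightedL1 μ φ := by
  have hball x := (hN x).1
  have hc0 : 0 < c :=
    pos_of_mul_pos_right ((by positivity : (0 : ℝ) < 2 * (N + 1) * R).trans_le hc) hε.le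
  have hEpos : 0 < measOf μ E := (measOf_nonneg hμ0 _).trans_lt hEb
  have hE : E.Nonempty := Set.nonempty_iff_ne_empty.2 fun h => by simp [h, measOf] at hEpos
  set φ : X → ℝ := fun x => max (c - Metric.infDist x E) 0
  have hφE : ∀ x ∈ E, φ x = c := fun x hx => by
    simp [φ, Metric.infDist_zero_of_mem hx, hc0.le]
  have hφsupp : ∀ x, φ x ≠ 0 → Metric.infDist x E < c := fun x hx => by
    by_contra! h
    exact hx (max_eq_right (by linarith))
  have hφlip : ∀ x y, |φ x - φ y| ≤ dist x y := fun x y => by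
    refine (abs_max_sub_max_le_abs _ _ _).trans ?_
    rw [sub_sub_sub_cancel_left, abs_sub_le_iff]
    constructor <;> linarith [Metric.infDist_le_infDist_add_dist (x := x) (y := y) (s := E),
      Metric.infDist_le_infDist_add_dist (x := y) (y := x) (s := E), dist_comm x y]
  set W := hW.toFinset
  have hsW : support μ ∩ nbhd R (support φ) ⊆ W := by
    rintro x ⟨-, y, hy, hxy⟩
    have hx : Metric.infDist x E < c + R := by
      linarith [hφsupp y hy, Metric.infDist_le_infDist_add_dist (x := x) (y := y) (s := E)]
    obtain ⟨e, he, hxe⟩ := (Metric.infDist_lt_iff hE).1 hx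
    exact hW.mem_toFinset.2 ⟨e, he, hxe.le⟩
  have hgrad : gradL1 μ R φ ≤ N * R * measOf μ (nbhd (c + R) E) := by
    rw [gradL1_eq_sum hball hsW, measOf_eq_sum_filter (s := W) fun x hx => hW.mem_toFinset.2 hx.1,
      filter_true_of_mem fun x hx => hW.mem_toFinset.1 hx, mul_sum]
    refine sum_le_sum fun x _ => ?_
    refine (mul_le_mul_of_nonneg_left ?_ (hμ0 x)).trans_eq (mul_comm _ _)
    calc ∑ y ∈ nbrs hball μ x, |φ x - φ y| ≤ ∑ y ∈ nbrs hball μ x, R :=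
          sum_le_sum fun y hy => (hφlip x y).trans ((mem_nbrs hball).1 hy).2
      _ = #(nbrs hball μ x) * R := by rw [sum_const, nsmul_eq_mul]
      _ ≤ N * R := by
          gcongr
          calc #(nbrs hball μ x) ≤ #(hball x).toFinset := card_filter_le _ _
            _ = {y | dist x y ≤ R}.ncard := (Set.ncard_eq_toFinset_card _ _).symm
            _ ≤ N := (hN x).2
  have hweighted : c * measOf μ E ≤ weightedL1 μ φ := by
    have hEW : E ⊆ nbhd (c + R) E := self_subset_nbhd (by positivity) E
    rw [weightedL1_eq_sum (s := W) fun x hx => hsW ⟨hx.1, self_subset_nbhd hR.le _ hx.2⟩,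
      measOf_eq_sum_filter (s := W) fun x hx => hW.mem_toFinset.2 (hEW hx.1), mul_sum]
    calc ∑ x ∈ W with x ∈ E, c * μ x = ∑ x ∈ W with x ∈ E, μ x * |φ x| :=
          sum_congr rfl fun x hx => by rw [hφE x (mem_filter.1 hx).2, abs_of_pos hc0, mul_comm]
      _ ≤ ∑ x ∈ W, μ x * |φ x| := sum_le_sum_of_subset_of_nonneg (filter_subset _ _)
          fun x _ _ => mul_nonneg (hμ0 x) (abs_nonneg _)
  refine ⟨φ, fun x hx => (Metric.mem_thickening_iff_infDist_lt hE).2 (hφsupp x hx), ?_⟩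
  rw [measOf_nbhd hμ (by positivity)] at hgrad
  calc gradL1 μ R φ ≤ N * R * (measOf μ E + measOf μ (bdry (c + R) E)) := hgrad
    _ ≤ N * R * (measOf μ E + measOf μ E) := by gcongr
    _ < 2 * (N + 1) * R * measOf μ E := by nlinarith [mul_pos hR hEpos]
    _ ≤ ε * c * measOf μ E := mul_le_mul_of_nonneg_right hc hEpos.le
    _ ≤ ε * weightedL1 μ φ := by
          rw [mul_assoc]
          exact mul_le_mul_of_nonneg_left hweighted hε.le

end Variation

/-- Lemma 2.3 (for $ULA_\mu$): the 'function' (Reiter-type) formulation and the 'set'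
(Følner-type) formulation are equivalent for any bounded geometry metric space. -/
theorem ulamu_function_iff_set {X : Type*} [MetricSpace X] (hbg : BoundedGeometry X) :
    (∀ R : ℝ, 0 < R → ∀ ε : ℝ, 0 < ε → ∃ S : ℝ, 0 < S ∧
      ∀ μ : X → ℝ, IsProbFn μ → ∃ φ : X → ℝ,
        (Function.support φ).Finite ∧
        EMetric.diam (Function.support φ) ≤ ENNReal.ofReal S ∧
        (∑' x : Function.support μ,
            μ x * ∑' y : {y : X | μ y ≠ 0 ∧ dist (x : X) y ≤ R}, |φ x - φ y|)
          < ε * ∑' x : Function.support μ, μ x * |φ (x : X)|)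
    ↔
    (∀ R : ℝ, 0 < R → ∀ ε : ℝ, 0 < ε → ∃ S : ℝ, 0 < S ∧
      ∀ μ : X → ℝ, IsProbFn μ → ∃ E : Set X, E.Finite ∧
        EMetric.diam E ≤ ENNReal.ofReal S ∧
        measOf μ (bdry R E) < ε * measOf μ E) := by
  constructor
  · intro hfun R hR ε hε
    obtain ⟨S, hS, hφ⟩ := hfun R hR ε hε
    refine ⟨S, hS, fun μ hμ => ?_⟩
    obtain ⟨φ, hφfin, hφdiam, hlt⟩ := hφ μ hμ
    obtain ⟨E, hEφ, hE⟩ :=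
      exists_bdry_lt_of_gradL1_lt hμ.1 hR.le (hbg.finite_ball hR) hφfin hlt
    exact ⟨E, hφfin.subset hEφ, (Metric.ediam_mono hEφ).trans hφdiam, hE⟩
  · intro hset R hR ε hε
    obtain ⟨N, hN⟩ := hbg R hR
    set c := 2 * (N + 1) * R / ε
    have hc : 0 < c := by positivity
    obtain ⟨S, hS, hE⟩ := hset (c + R) (by positivity) 1 one_pos
    refine ⟨S + 2 * c, by positivity, fun μ hμ => ?_⟩
    obtain ⟨E, hEfin, hEdiam, hEb⟩ := hE μ hμ
    have hW : (nbhd (c + R) E).Finite := finite_nbhd (hbg.finite_ball (by positivity)) hEfin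
    obtain ⟨φ, hφ, hlt⟩ := exists_gradL1_lt_of_bdry_lt hμ.1 hμ.2.1 hR hN hε
      (mul_div_cancel₀ _ hε.ne').ge hW (by rwa [one_mul] at hEb)
    exact ⟨φ, hW.subset (hφ.trans (thickening_subset_nbhd (by linarith) E)),
      (Metric.ediam_mono hφ).trans (ediam_thickening_le_ofReal hS.le hc.le hEdiam), hlt⟩
end

section
/- Let X and Y be bounded geometry metric spaces and suppose there exists a coarse embedding f : X → Y. If Y has ULA_μ, then X has ULA_μ. In particular, ULA_μ is invariant under coarse equivalence. -/
lemma measOf_indicator {X : Type*} (μ : X → ℝ) (E : Set X) :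
    measOf μ E = ∑' x, E.indicator μ x :=
  tsum_subtype E μ

lemma measOf_mono {X : Type*} {μ : X → ℝ} (h0 : ∀ x, 0 ≤ μ x) (hs : Summable μ)
    {A B : Set X} (hAB : A ⊆ B) : measOf μ A ≤ measOf μ B := by
  rw [measOf_indicator, measOf_indicator]
  exact Summable.tsum_le_tsum (fun x => Set.indicator_le_indicator_of_subset hAB h0 x)
    (hs.indicator A) (hs.indicator B)

lemma measOf_preimage {X Y : Type*} (f : X → Y) {μ : X → ℝ} (hs : Summable μ)
    (E' : Set Y) :
    measOf (fun y => measOf μ (f ⁻¹' {y})) E' = measOf μ (f ⁻¹' E') := by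
  have hh : Summable ((f ⁻¹' E').indicator μ) := hs.indicator _
  have key : ∀ y, (∑' x : f ⁻¹' {y}, (f ⁻¹' E').indicator μ x)
      = E'.indicator (fun y => measOf μ (f ⁻¹' {y})) y := by
    intro y
    by_cases hy : y ∈ E'
    · rw [Set.indicator_of_mem hy]
      refine tsum_congr fun x => ?_
      have hx : f (x : X) = y := x.2
      exact Set.indicator_of_mem (by simp [Set.mem_preimage, hx, hy]) μ
    · rw [Set.indicator_of_notMem hy]
      have : ∀ x : f ⁻¹' {y}, (f ⁻¹' E').indicator μ x = 0 := by
        intro x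
        have hx : f (x : X) = y := x.2
        exact Set.indicator_of_notMem (by simp [Set.mem_preimage, hx, hy]) μ
      simp [this]
  calc measOf (fun y => measOf μ (f ⁻¹' {y})) E'
      = ∑' y, E'.indicator (fun y => measOf μ (f ⁻¹' {y})) y := measOf_indicator _ _
    _ = ∑' y, ∑' x : f ⁻¹' {y}, (f ⁻¹' E').indicator μ x :=
        tsum_congr fun y => (key y).symm
    _ = ∑' x, (f ⁻¹' E').indicator μ x := (hh.hasSum.tsum_fiberwise f).tsum_eq
    _ = measOf μ (f ⁻¹' E') := (measOf_indicator μ _).symm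

/-- If there is a coarse embedding of a bounded geometry space $X$ into a bounded geometry
space $Y$ with $ULA_\mu$, then $X$ has $ULA_\mu$.  In particular $ULA_\mu$ is a coarse
invariant. -/
theorem ulamu_coarse_invariant {X Y : Type*} [MetricSpace X] [MetricSpace Y]
    (hbgX : BoundedGeometry X) (hbgY : BoundedGeometry Y)
    (f : X → Y) (hf : CoarseEmbedding f) (hY : ULAmu Y) : ULAmu X := by
  intro R hR ε hε
  obtain ⟨ρm, ρp, hρm, hρp, hten, hbd⟩ := hf
  set R' : ℝ := max (ρp R) 1 with hR'def
  have hR' : (0 : ℝ) < R' := lt_of_lt_of_le one_pos (le_max_right _ _)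
  obtain ⟨S', hS', hYmain⟩ := hY R' hR' ε hε
  obtain ⟨T, hT⟩ := Filter.eventually_atTop.mp (hten.eventually_gt_atTop S')
  set S : ℝ := max T 1 with hSdef
  have hS : (0 : ℝ) < S := lt_of_lt_of_le one_pos (le_max_right _ _)
  refine ⟨S, hS, ?_⟩
  intro μ ⟨hμ0, hμs, hμ1⟩
  set ν : Y → ℝ := fun y => measOf μ (f ⁻¹' {y}) with hνdef
  have hνtot : HasSum ν 1 := by
    have := hμs.hasSum.tsum_fiberwise f
    rwa [hμ1] at this
  have hνprob : IsProbFn ν :=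
    ⟨fun y => tsum_nonneg fun x => hμ0 x, hνtot.summable, hνtot.tsum_eq⟩
  obtain ⟨E', hE'fin, hE'diam, hE'bd⟩ := hYmain ν hνprob
  set E : Set X := f ⁻¹' E' with hEdef
  have hdistE : ∀ x ∈ E, ∀ y ∈ E, dist x y ≤ S := by
    intro x hx y hy
    have h1 : ENNReal.ofReal (dist (f x) (f y)) ≤ ENNReal.ofReal S' := by
      rw [← edist_dist]
      exact le_trans (EMetric.edist_le_diam_of_mem hx hy) hE'diam
    have h2 : dist (f x) (f y) ≤ S' := (ENNReal.ofReal_le_ofReal_iff hS'.le).mp h1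
    by_contra hlt
    push_neg at hlt
    have hTd : T ≤ dist x y := le_trans (le_max_left T 1) hlt.le
    have := hT (dist x y) hTd
    have := (hbd x y).1
    linarith
  have hdiam : EMetric.diam E ≤ ENNReal.ofReal S :=
    EMetric.diam_le fun x hx y hy => by
      rw [edist_dist]; exact ENNReal.ofReal_le_ofReal (hdistE x hx y hy)
  have hEfin : E.Finite := by
    rcases E.eq_empty_or_nonempty with h | ⟨x₀, hx₀⟩
    · simp [h]
    · obtain ⟨N, hN⟩ := hbgX S hS
      exact (hN x₀).1.subset fun y hy => hdistE x₀ hx₀ y hy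
  have hsub : bdry R E ⊆ f ⁻¹' (bdry R' E') := by
    rintro x ⟨⟨e, heE, hde⟩, hxE⟩
    refine ⟨⟨f e, heE, ?_⟩, hxE⟩
    calc dist (f x) (f e) ≤ ρp (dist x e) := (hbd x e).2
      _ ≤ ρp R := hρp hde
      _ ≤ R' := le_max_left _ _
  have hkey : measOf μ (bdry R E) ≤ measOf ν (bdry R' E') := by
    rw [hνdef, measOf_preimage f hμs]
    exact measOf_mono hμ0 hμs hsub
  have hEeq : measOf ν E' = measOf μ E := measOf_preimage f hμs E'
  exact ⟨E, hEfin, hdiam, by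
    calc measOf μ (bdry R E) ≤ measOf ν (bdry R' E') := hkey
      _ < ε * measOf ν E' := hE'bd
      _ = ε * measOf μ E := by rw [hEeq]⟩
end

section
/- Let X be a bounded geometry metric space with property A. Then X has ULA_μ. -/
/-- Property A (Higson–Roe formulation). -/
def PropertyA (X : Type*) [MetricSpace X] : Prop :=
  ∀ R : ℝ, 0 < R → ∀ ε : ℝ, 0 < ε → ∃ S : ℝ, 0 < S ∧ ∃ ξ : X → X → ℝ,
    (∀ x, IsProbFn (ξ x)) ∧
    (∀ x y, dist x y ≤ R → (∑' z, |ξ x z - ξ y z|) < ε) ∧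
    (∀ x z, ξ x z ≠ 0 → dist x z ≤ S)

/-!
Fix `z` and put `f x = ξ_x(z)`. Every superlevel set `{f > t}`, `t > 0`, lies in `B(z; S)`, hence
is a finite set of diameter `≤ 2S`. If all of them satisfied `ε μ(E) ≤ μ(∂_R E)`, integrating over
`t` (co-area) would give `ε ∑ μ(x) f(x) ≤ ∑ μ(x) ∑_{e ∈ B(x;R)} (f(e) - f(x))⁺`, because
`x ∈ ∂_R {f > t}` forces `f(x) ≤ t < f(e)` for some `e ∈ B(x;R)`. Summing over `z`, the left side
becomes `ε`, while the right side is at most `N · sup_{d(x,e) ≤ R} ‖ξ_e - ξ_x‖₁ < ε`, where `N`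
bounds `|B(x;R)|`. Sums are taken in `ℝ≥0∞`, and bounded geometry makes `X` countable, so all sums
and the integral over `t` commute.
-/

open MeasureTheory Metric Set ENNReal

section BoundedGeometry

variable {X : Type*} [MetricSpace X]

lemma BoundedGeometry.finite_closedBall (h : BoundedGeometry X) (x : X) (R : ℝ) :
    (closedBall x R).Finite := by
  obtain ⟨N, hN⟩ := h (max R 1) (by positivity)
  exact (hN x).1.subset fun y hy => (dist_comm x y ▸ mem_closedBall.1 hy).trans (le_max_left _ _)

lemma BoundedGeometry.countable (h : BoundedGeometry X) : Countable X := by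
  rcases isEmpty_or_nonempty X with hX | ⟨⟨x⟩⟩
  · infer_instance
  · rw [← countable_univ_iff, ← iUnion_closedBall_nat x]
    exact countable_iUnion fun n => (h.finite_closedBall x n).countable

lemma BoundedGeometry.exists_encard_closedBall_le (h : BoundedGeometry X) {R : ℝ} (hR : 0 < R) :
    ∃ N : ℕ, ∀ x : X, (closedBall x R).encard ≤ N := by
  obtain ⟨N, hN⟩ := h R hR
  refine ⟨N, fun x => ?_⟩
  have hball : closedBall x R = {y | dist x y ≤ R} := by ext; simp [dist_comm]
  rw [hball, ← (hN x).1.cast_ncard_eq]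
  exact_mod_cast (hN x).2

end BoundedGeometry

lemma ofReal_measOf {X : Type*} {μ : X → ℝ} (h0 : ∀ x, 0 ≤ μ x) (hμ : Summable μ) (E : Set X) :
    ENNReal.ofReal (measOf μ E) = ∑' x : E, ENNReal.ofReal (μ x) :=
  ofReal_tsum_of_nonneg (fun x => h0 x) (hμ.subtype E)

lemma lintegral_tsum_superlevel {X : Type*} [Countable X] (w : X → ℝ≥0∞) (f : X → ℝ) :
    ∫⁻ t in Ioi 0, ∑' x : {x | t < f x}, w x = ∑' x, w x * ENNReal.ofReal (f x) := by
  have hind : ∀ x t, {x | t < f x}.indicator w x = (Iio (f x)).indicator (fun _ => w x) t := by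
    intro x t
    by_cases h : t < f x <;> simp [h]
  simp_rw [tsum_subtype, hind]
  rw [lintegral_tsum fun x => (measurable_const.indicator measurableSet_Iio).aemeasurable]
  congr 1 with x
  rw [lintegral_indicator measurableSet_Iio, setLIntegral_const,
    Measure.restrict_apply measurableSet_Iio, Iio_inter_Ioi, Real.volume_Ioo, sub_zero, mul_comm]

section Coarea

variable {X : Type*} [MetricSpace X]

lemma indicator_bdry_superlevel_le (w : X → ℝ≥0∞) (f : X → ℝ) (R t : ℝ) (x : X) :
    (bdry R {x | t < f x}).indicator w x ≤
      w x * ∑' e : closedBall x R, (Ico (f x) (f e)).indicator 1 t := by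
  by_cases hx : x ∈ bdry R {x | t < f x}
  · obtain ⟨⟨e, he, hxe⟩, hxt⟩ := id hx
    have hone : 1 ≤ ∑' e : closedBall x R, (Ico (f x) (f e)).indicator (1 : ℝ → ℝ≥0∞) t :=
      le_of_eq_of_le (by simp [not_lt.1 (show ¬t < f x from hxt), show t < f e from he])
        (ENNReal.le_tsum (⟨e, mem_closedBall.2 (dist_comm x e ▸ hxe)⟩ : closedBall x R))
    calc (bdry R {x | t < f x}).indicator w x = w x * 1 := by simp [indicator_of_mem hx]
      _ ≤ _ := by gcongr
  · simp [indicator_of_notMem hx]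

variable [Countable X]

lemma lintegral_tsum_bdry_superlevel_le (w : X → ℝ≥0∞) (f : X → ℝ) (R : ℝ) :
    ∫⁻ t in Ioi 0, ∑' x : bdry R {x | t < f x}, w x ≤
      ∑' x, w x * ∑' e : closedBall x R, ENNReal.ofReal (f e - f x) :=
  calc ∫⁻ t in Ioi 0, ∑' x : bdry R {x | t < f x}, w x
      ≤ ∫⁻ t in Ioi 0, ∑' x, w x * ∑' e : closedBall x R, (Ico (f x) (f e)).indicator 1 t := by
        simp_rw [tsum_subtype]
        exact lintegral_mono fun t =>
          ENNReal.tsum_le_tsum fun x => indicator_bdry_superlevel_le w f R t x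
    _ = ∑' x, w x * ∑' e : closedBall x R, volume (Ico (f x) (f e) ∩ Ioi 0) := by
        have hmeas : ∀ x e, Measurable ((Ico (f x) (f e)).indicator (1 : ℝ → ℝ≥0∞)) :=
          fun x e => measurable_one.indicator measurableSet_Ico
        have hmeas_sum : ∀ x, Measurable fun t => ∑' e : closedBall x R,
            (Ico (f x) (f e)).indicator (1 : ℝ → ℝ≥0∞) t :=
          fun x => Measurable.tsum fun e => hmeas x e
        rw [lintegral_tsum fun x => ((hmeas_sum x).const_mul _).aemeasurable]
        congr 1 with x
        rw [lintegral_const_mul _ (hmeas_sum x),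
          lintegral_tsum fun e : closedBall x R => (hmeas x e).aemeasurable]
        congr 2 with e
        rw [lintegral_indicator_one measurableSet_Ico, Measure.restrict_apply measurableSet_Ico]
    _ ≤ _ := by
        gcongr with x e
        exact (measure_mono inter_subset_left).trans Real.volume_Ico.le

lemma mul_tsum_le_of_forall_superlevel {w : X → ℝ≥0∞} {f : X → ℝ} {R : ℝ} {ε : ℝ≥0∞}
    (h : ∀ t > 0, ε * ∑' x : {x | t < f x}, w x ≤ ∑' x : bdry R {x | t < f x}, w x) :
    ε * ∑' x, w x * ENNReal.ofReal (f x) ≤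
      ∑' x, w x * ∑' e : closedBall x R, ENNReal.ofReal (f e - f x) :=
  calc ε * ∑' x, w x * ENNReal.ofReal (f x)
      = ε * ∫⁻ t in Ioi 0, ∑' x : {x | t < f x}, w x := by rw [lintegral_tsum_superlevel]
    _ ≤ ∫⁻ t in Ioi 0, ε * ∑' x : {x | t < f x}, w x := lintegral_const_mul_le _ _
    _ ≤ ∫⁻ t in Ioi 0, ∑' x : bdry R {x | t < f x}, w x := setLIntegral_mono' measurableSet_Ioi h
    _ ≤ _ := lintegral_tsum_bdry_superlevel_le w f R

end Coarea

lemma exists_superlevel_bdry_lt {X : Type*} [MetricSpace X] [Countable X] {R : ℝ}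
    {w : X → ℝ≥0∞} (hw : ∑' x, w x = 1) {ξ : X → X → ℝ}
    (hξ : ∀ x, ∑' z, ENNReal.ofReal (ξ x z) = 1) {c ε : ℝ≥0∞}
    (hvar : ∀ x, ∑' e : closedBall x R, ∑' z, ENNReal.ofReal (ξ e z - ξ x z) ≤ c)
    (hc : c < ε) :
    ∃ z, ∃ t > 0, ∑' x : bdry R {x | t < ξ x z}, w x < ε * ∑' x : {x | t < ξ x z}, w x := by
  by_contra! h
  have hmass : ∑' z, ∑' x, w x * ENNReal.ofReal (ξ x z) = 1 := by
    rw [ENNReal.tsum_comm]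
    simp_rw [ENNReal.tsum_mul_left, hξ, mul_one, hw]
  refine hc.not_ge ?_
  calc ε = ∑' z, ε * ∑' x, w x * ENNReal.ofReal (ξ x z) := by
        rw [ENNReal.tsum_mul_left, hmass, mul_one]
    _ ≤ ∑' z, ∑' x, w x * ∑' e : closedBall x R, ENNReal.ofReal (ξ e z - ξ x z) :=
        ENNReal.tsum_le_tsum fun z => mul_tsum_le_of_forall_superlevel (h z)
    _ = ∑' x, w x * ∑' e : closedBall x R, ∑' z, ENNReal.ofReal (ξ e z - ξ x z) := by
        rw [ENNReal.tsum_comm]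
        congr 1 with x
        rw [ENNReal.tsum_mul_left, ENNReal.tsum_comm]
    _ ≤ ∑' x, w x * c := by gcongr with x; exact hvar x
    _ = c := by rw [ENNReal.tsum_mul_right, hw, one_mul]

lemma IsProbFn.tsum_ofReal {X : Type*} {μ : X → ℝ} (h : IsProbFn μ) :
    ∑' x, ENNReal.ofReal (μ x) = 1 := by
  rw [← ofReal_tsum_of_nonneg h.1 h.2.1, h.2.2, ofReal_one]

lemma tsum_ofReal_sub_le {X : Type*} {p q : X → ℝ} (hp : Summable p) (hq : Summable q) :
    ∑' z, ENNReal.ofReal (p z - q z) ≤ ENNReal.ofReal (∑' z, |p z - q z|) := by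
  rw [ofReal_tsum_of_nonneg (fun _ => abs_nonneg _) (hp.sub hq).abs]
  exact ENNReal.tsum_le_tsum fun z => ofReal_le_ofReal (le_abs_self _)

lemma ediam_le_of_subset_closedBall {X : Type*} [MetricSpace X] {s : Set X} {z : X} {S : ℝ}
    (hS : 0 ≤ S) (hs : s ⊆ closedBall z S) : ediam s ≤ ENNReal.ofReal (2 * S) := by
  rw [← closedEBall_ofReal hS] at hs
  rw [ofReal_mul zero_le_two, ofReal_ofNat]
  exact (ediam_mono hs).trans ediam_closedEBall_le

/-- Proposition 3.2: property A implies $ULA_\mu$ for bounded geometry metric spaces. -/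
theorem propertyA_implies_ulamu {X : Type*} [MetricSpace X]
    (hbg : BoundedGeometry X) (hA : PropertyA X) : ULAmu X := by
  intro R hR ε hε
  have := hbg.countable
  obtain ⟨N, hN⟩ := hbg.exists_encard_closedBall_le hR
  set δ := ε / (N + 1)
  obtain ⟨S, hS, ξ, hprob, hvar, hsupp⟩ := hA R hR δ (by positivity)
  refine ⟨2 * S, by positivity, fun μ hμ => ?_⟩
  have hball : ∀ x, ∑' e : closedBall x R, ∑' z, ENNReal.ofReal (ξ e z - ξ x z) ≤
      N * ENNReal.ofReal δ := fun x =>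
    calc _ ≤ ∑' e : closedBall x R, ENNReal.ofReal δ := ENNReal.tsum_le_tsum fun e =>
          (tsum_ofReal_sub_le (hprob e).2.1 (hprob x).2.1).trans
            (ofReal_le_ofReal (hvar e x (mem_closedBall.1 e.2)).le)
      _ ≤ _ := by rw [ENNReal.tsum_set_const]; gcongr; exact_mod_cast hN x
  have hδ : (N : ℝ≥0∞) * ENNReal.ofReal δ < ENNReal.ofReal ε := by
    rw [← ofReal_natCast, ← ofReal_mul (by positivity), ofReal_lt_ofReal_iff hε, ← mul_div_assoc,
      div_lt_iff₀ (by positivity)]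
    linarith
  obtain ⟨z, t, ht, hlt⟩ := exists_superlevel_bdry_lt hμ.tsum_ofReal
    (fun x => (hprob x).tsum_ofReal) hball hδ
  have hsub : {x | t < ξ x z} ⊆ closedBall z S := fun x hx =>
    mem_closedBall.2 (hsupp x z (ht.trans hx).ne')
  refine ⟨_, (hbg.finite_closedBall z S).subset hsub, ediam_le_of_subset_closedBall hS.le hsub, ?_⟩
  rw [← ofReal_measOf hμ.1 hμ.2.1, ← ofReal_measOf hμ.1 hμ.2.1, ← ofReal_mul hε.le,
    ofReal_lt_ofReal_iff'] at hlt
  exact hlt.1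
end

section
/- Let X be a bounded geometry metric space which is a space of graphs associated to a sequence (X_n) of finite connected graphs: as a set X = ⊔_n X_n, the metric of X restricts to the graph (edge-path) metric on each X_n, and d(X_n, X \ X_n) → ∞ as n → ∞. Suppose X is an expander: |X_n| → ∞ as n → ∞ and there exists ε > 0 such that every subset A ⊆ X_n with |A| ≤ |X_n|/2 satisfies |∂_1 A| ≥ ε·|A| (boundary taken in X_n with its graph metric). Then X does not have ULA. -/
/-- Theorem 4.2 (expander case): a space of graphs $X = \bigsqcup_n X_n$ which is an
expander does not have $ULA$.  Here the space of graphs is modelled as a sigma type with a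
metric restricting to the graph metric on each piece, with the pieces drifting apart. -/
theorem expander_not_ula {V : ℕ → Type*} [∀ n, Fintype (V n)]
    (G : ∀ n, SimpleGraph (V n)) (hconn : ∀ n, (G n).Connected)
    [MetricSpace (Σ n, V n)] (hbg : BoundedGeometry (Σ n, V n))
    (hmetric : ∀ (n : ℕ) (x y : V n),
      dist (⟨n, x⟩ : Σ n, V n) (⟨n, y⟩ : Σ n, V n) = (G n).dist x y)
    (hsep : ∀ D : ℝ, ∃ N : ℕ, ∀ n, N ≤ n → ∀ m, m ≠ n → ∀ (x : V n) (y : V m),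
      D ≤ dist (⟨n, x⟩ : Σ n, V n) (⟨m, y⟩ : Σ n, V n))
    (hcard : Filter.Tendsto (fun n => Fintype.card (V n)) Filter.atTop Filter.atTop)
    (hexp : ∃ ε : ℝ, 0 < ε ∧ ∀ (n : ℕ) (A : Set (V n)),
      2 * A.ncard ≤ Fintype.card (V n) →
      ε * (A.ncard : ℝ) ≤ (({y : V n | y ∉ A ∧ ∃ a ∈ A, (G n).dist y a ≤ 1}).ncard : ℝ)) :
    ¬ ULA (Σ n, V n) := by
  intro hula
  obtain ⟨ε, hε, hexp⟩ := hexp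
  obtain ⟨S, hS, hULA⟩ := hula 1 one_pos ε hε
  obtain ⟨N, hN⟩ := hbg S hS
  -- choose n with card (V n) ≥ 2 * N
  obtain ⟨n₀, hn₀⟩ := (Filter.tendsto_atTop.mp hcard (2 * N)).exists
  set n := n₀ with hn
  -- the finite set F = piece n
  set F : Set (Σ n, V n) := Set.range (Sigma.mk n) with hF
  have hFfin : F.Finite := Set.finite_range _
  obtain ⟨E, hEfin, hEdiam, hEineq⟩ := hULA F hFfin
  -- A = trace of E on piece n
  set A : Set (V n) := {v | (⟨n, v⟩ : Σ n, V n) ∈ E} with hA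
  have hEF : E ∩ F = Sigma.mk n '' A := by
    ext p
    constructor
    · rintro ⟨hpE, v, rfl⟩
      exact ⟨v, hpE, rfl⟩
    · rintro ⟨v, hv, rfl⟩
      exact ⟨hv, v, rfl⟩
  have hinj : Function.Injective (Sigma.mk n : V n → Σ n, V n) := sigma_mk_injective
  have hcardEF : (E ∩ F).ncard = A.ncard := by
    rw [hEF, Set.ncard_image_of_injective _ hinj]
  -- |E| ≤ N
  have hEle : E.ncard ≤ N := by
    rcases E.eq_empty_or_nonempty with h | ⟨e, he⟩
    · simp [h]
    · have hsub : E ⊆ {y | dist e y ≤ S} := by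
        intro x hx
        have h1 : edist e x ≤ ENNReal.ofReal S :=
          le_trans (EMetric.edist_le_diam_of_mem he hx) hEdiam
        rw [edist_dist] at h1
        exact (ENNReal.ofReal_le_ofReal_iff hS.le).mp h1
      exact le_trans (Set.ncard_le_ncard hsub (hN e).1) (hN e).2
  have hAle : A.ncard ≤ E.ncard := by
    have : Sigma.mk n '' A ⊆ E := by rw [← hEF]; exact Set.inter_subset_left
    calc A.ncard = (Sigma.mk n '' A).ncard := (Set.ncard_image_of_injective _ hinj).symm
      _ ≤ E.ncard := Set.ncard_le_ncard this hEfin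
  have hA2 : 2 * A.ncard ≤ Fintype.card (V n) := by
    have := hn₀
    omega
  have hexpn := hexp n A hA2
  -- the graph boundary of A embeds into bdry 1 E ∩ F
  set B : Set (V n) := {y : V n | y ∉ A ∧ ∃ a ∈ A, (G n).dist y a ≤ 1} with hB
  have hBsub : Sigma.mk n '' B ⊆ bdry 1 E ∩ F := by
    rintro p ⟨y, ⟨hyA, a, haA, hd⟩, rfl⟩
    refine ⟨⟨⟨⟨n, a⟩, haA, ?_⟩, hyA⟩, y, rfl⟩
    rw [hmetric n y a]
    exact_mod_cast hd
  have hBle : (B.ncard : ℝ) ≤ ((bdry 1 E ∩ F).ncard : ℝ) := by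
    have : (Sigma.mk n '' B).ncard ≤ (bdry 1 E ∩ F).ncard :=
      Set.ncard_le_ncard hBsub (hFfin.subset Set.inter_subset_right)
    rw [Set.ncard_image_of_injective _ hinj] at this
    exact_mod_cast this
  rw [hcardEF] at hEineq
  linarith
end

section
/- Let X be a bounded geometry metric space which is a space of graphs associated to a sequence (X_n) of finite connected graphs: as a set X = ⊔_n X_n, the metric of X restricts to the graph (edge-path) metric on each X_n, and d(X_n, X \ X_n) → ∞ as n → ∞. Suppose X has large girth, i.e. girth(X_n) → ∞ as n → ∞, and every vertex of every X_n has degree at least three. Then X does not have ULA. -/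
/-!
Apply ULA with `R = ε = 1` and let `S` be the resulting diameter bound. In a piece `X_n` far from
the others and of girth larger than `2S + 2`, a finite set `E` of diameter at most `S` meeting
`X_n` lies inside `X_n`. Grow a breadth-first search tree from a point `u ∈ E`: large girth means
that no vertex within distance `S` of `u` has two neighbours at most as far from `u` as itself, so
every vertex of `E` has at least `3 - 1 = 2` children and every child has a single parent. The
children therefore number at least `2|E|`, and all but `|E| - 1` of them lie in the outer boundary
of `E`, so `|∂₁E| > |E|`, against the choice of `E`.
-/

open Finset

namespace SimpleGraph

variable {V : Type*} {G : SimpleGraph V}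

def outerBoundary [DecidableEq V] [G.LocallyFinite] (E : Finset V) : Finset V :=
  E.biUnion (fun x => G.neighborFinset x) \ E

lemma Walk.eq_of_mem_support_of_dist_le {u v w : V} {p : G.Walk u v}
    (hp : p.length = G.dist u v) (hw : w ∈ p.support) (hd : G.dist u v ≤ G.dist u w) :
    w = v := by
  classical
  have := G.dist_le (p.takeUntil w hw)
  have := congrArg Walk.length (p.take_spec hw)
  rw [Walk.length_append] at this
  exact Walk.eq_of_length_eq_zero (p := p.dropUntil w hw) (by omega)

lemma egirth_le_dist_add_dist_add_two {u v w₁ w₂ : V} (hr : G.Reachable u v)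
    (h₁ : G.Adj v w₁) (h₂ : G.Adj v w₂) (hne : w₁ ≠ w₂)
    (hd₁ : G.dist u w₁ ≤ G.dist u v) (hd₂ : G.dist u w₂ ≤ G.dist u v) :
    G.egirth ≤ G.dist u w₁ + G.dist u w₂ + 2 := by
  obtain ⟨p₁, hp₁, hl₁⟩ := (hr.trans h₁.reachable).exists_path_of_dist
  obtain ⟨p₂, hp₂, hl₂⟩ := (hr.trans h₂.reachable).exists_path_of_dist
  have hq₁ :=
    hp₁.concat (fun hv => h₁.ne (p₁.eq_of_mem_support_of_dist_le hl₁ hv hd₁)) h₁.symm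
  have hq₂ :=
    hp₂.concat (fun hv => h₂.ne (p₂.eq_of_mem_support_of_dist_le hl₂ hv hd₂)) h₂.symm
  have hne' : p₁.concat h₁.symm ≠ p₂.concat h₂.symm := fun h => hne (Walk.concat_inj h).1
  obtain ⟨_, -, -, c, hc, hlen⟩ := hq₁.exists_isCycle_length_le_add_of_ne hq₂ hne'
  calc G.egirth ≤ c.length := egirth_le_length hc
    _ ≤ G.dist u w₁ + G.dist u w₂ + 2 := by
      simp only [Walk.length_concat] at hlen
      exact_mod_cast (by omega : c.length ≤ G.dist u w₁ + G.dist u w₂ + 2)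

lemma eq_of_adj_of_dist_le_of_lt_egirth {s : ℕ} (hs : 2 * s + 2 < G.egirth) {u v w₁ w₂ : V}
    (hr : G.Reachable u v) (h₁ : G.Adj v w₁) (h₂ : G.Adj v w₂)
    (hd₁ : G.dist u w₁ ≤ G.dist u v) (hd₂ : G.dist u w₂ ≤ G.dist u v)
    (hs₁ : G.dist u w₁ ≤ s) (hs₂ : G.dist u w₂ ≤ s) : w₁ = w₂ := by
  by_contra hne
  have := egirth_le_dist_add_dist_add_two hr h₁ h₂ hne hd₁ hd₂
  have : (G.dist u w₁ + G.dist u w₂ + 2 : ℕ∞) ≤ 2 * s + 2 := by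
    exact_mod_cast (by omega : G.dist u w₁ + G.dist u w₂ + 2 ≤ 2 * s + 2)
  exact absurd hs (not_lt.mpr (by order))

variable [G.LocallyFinite]

lemma degree_le_card_filter_dist_eq_add_one {s : ℕ} (hs : 2 * s + 2 < G.egirth) {u x : V}
    (hr : G.Reachable u x) (hx : G.dist u x ≤ s) :
    G.degree x ≤ #{y ∈ G.neighborFinset x | G.dist u y = G.dist u x + 1} + 1 := by
  have hlower {w : V} (hw : G.Adj x w) (hne : G.dist u w ≠ G.dist u x + 1) :
      G.dist u w ≤ G.dist u x := by
    have := hw.reachable.dist_triangle_right u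
    rw [dist_eq_one_iff_adj.mpr hw] at this
    omega
  have hlow : #{y ∈ G.neighborFinset x | ¬ G.dist u y = G.dist u x + 1} ≤ 1 := by
    refine card_le_one.mpr fun w₁ hw₁ w₂ hw₂ => ?_
    simp only [mem_filter, mem_neighborFinset] at hw₁ hw₂
    have hd₁ := hlower hw₁.1 hw₁.2
    have hd₂ := hlower hw₂.1 hw₂.2
    exact eq_of_adj_of_dist_le_of_lt_egirth hs hr hw₁.1 hw₂.1 hd₁ hd₂ (hd₁.trans hx)
      (hd₂.trans hx)
  rw [← card_neighborFinset_eq_degree, ← card_filter_add_card_filter_not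
    (s := G.neighborFinset x) (fun y => G.dist u y = G.dist u x + 1)]
  omega

variable [DecidableEq V]

theorem card_lt_card_outerBoundary (hconn : G.Connected) {s : ℕ} (hs : 2 * s + 2 < G.egirth)
    {E : Finset V} (hE : E.Nonempty) (hdiam : ∀ x ∈ E, ∀ y ∈ E, G.dist x y ≤ s)
    (hdeg : ∀ x ∈ E, 3 ≤ G.degree x) : #E < #(G.outerBoundary E) := by
  obtain ⟨u, hu⟩ := hE
  set children : V → Finset V :=
    fun x => {y ∈ G.neighborFinset x | G.dist u y = G.dist u x + 1}
  have hchildren : ∀ x ∈ E, 2 ≤ #(children x) := fun x hx => by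
    have := degree_le_card_filter_dist_eq_add_one hs (hconn u x) (hdiam u hu x hx)
    have := hdeg x hx
    simp only [children]
    omega
  have hdisj : (E : Set V).PairwiseDisjoint children := by
    intro x hx x' hx' hne
    refine Finset.disjoint_left.mpr fun y hy hy' => hne ?_
    simp only [children, mem_filter, mem_neighborFinset] at hy hy'
    exact eq_of_adj_of_dist_le_of_lt_egirth hs (hconn u y) hy.1.symm hy'.1.symm (by omega)
      (by omega) (hdiam u hu x hx) (hdiam u hu x' hx')
  have hsub : E.biUnion children ⊆ E.erase u ∪ G.outerBoundary E := by
    intro y hy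
    obtain ⟨x, hx, hy⟩ := mem_biUnion.mp hy
    simp only [children, mem_filter] at hy
    by_cases hyE : y ∈ E
    · refine mem_union_left _ (mem_erase.mpr ⟨?_, hyE⟩)
      rintro rfl
      simp at hy
    · exact mem_union_right _ (mem_sdiff.mpr ⟨mem_biUnion.mpr ⟨x, hx, hy.1⟩, hyE⟩)
  have hlower := card_nsmul_le_sum E (fun x => #(children x)) 2 hchildren
  rw [← card_biUnion hdisj, smul_eq_mul] at hlower
  have hupper := (card_le_card hsub).trans (card_union_le _ _)
  rw [card_erase_of_mem hu] at hupper
  have := card_pos.mpr ⟨u, hu⟩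
  omega

end SimpleGraph

open Set

lemma card_outerBoundary_le_ncard_bdry_inter_range {V X : Type*} [MetricSpace X] [Finite V]
    {G : SimpleGraph V} [DecidableEq V] [G.LocallyFinite] {f : V → X}
    (hf : Function.Injective f) (hdist : ∀ x y, dist (f x) (f y) = G.dist x y) (E : Finset V) :
    #(G.outerBoundary E) ≤ (bdry 1 (f '' E) ∩ range f).ncard := by
  rw [← ncard_coe_finset, ← ncard_image_of_injective _ hf]
  refine ncard_le_ncard ?_ ((finite_range f).inter_of_right _)
  rintro _ ⟨y, hy, rfl⟩
  obtain ⟨hyN, hyE⟩ := Finset.mem_sdiff.mp hy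
  obtain ⟨x, hx, hxy⟩ := Finset.mem_biUnion.mp hyN
  have hnotin : f y ∉ f '' E := fun ⟨z, hz, hzy⟩ => hyE (hf hzy ▸ hz)
  refine ⟨⟨⟨f x, mem_image_of_mem f hx, ?_⟩, hnotin⟩, mem_range_self y⟩
  rw [hdist, SimpleGraph.dist_eq_one_iff_adj.mpr ((G.mem_neighborFinset x y).mp hxy).symm]
  norm_num

theorem large_girth_not_ula_general {V : ℕ → Type*} [∀ n, Fintype (V n)]
    (G : ∀ n, SimpleGraph (V n)) [∀ n, DecidableRel (G n).Adj]
    (hconn : ∀ n, (G n).Connected)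
    [MetricSpace (Σ n, V n)]
    (hmetric : ∀ (n : ℕ) (x y : V n),
      dist (⟨n, x⟩ : Σ n, V n) (⟨n, y⟩ : Σ n, V n) = (G n).dist x y)
    (hsep : ∀ D : ℝ, ∃ N : ℕ, ∀ n, N ≤ n → ∀ m, m ≠ n → ∀ (x : V n) (y : V m),
      D ≤ dist (⟨n, x⟩ : Σ n, V n) (⟨m, y⟩ : Σ n, V n))
    (hgirth : ∀ k : ℕ, ∃ N : ℕ, ∀ n, N ≤ n → (k : ℕ∞) ≤ (G n).girth)
    (hdeg : ∀ (n : ℕ) (v : V n), 3 ≤ (G n).degree v) :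
    ¬ ULA (Σ n, V n) := by
  classical
  intro hULA
  obtain ⟨S, hS, hF⟩ := hULA 1 one_pos 1 one_pos
  obtain ⟨N₁, hN₁⟩ := hsep (S + 1)
  obtain ⟨N₂, hN₂⟩ := hgirth (2 * ⌊S⌋₊ + 3)
  set n := max N₁ N₂
  obtain ⟨E, -, hEdiam, hcard⟩ := hF (range (Sigma.mk n)) (finite_range _)
  have hdistE {a b} (ha : a ∈ E) (hb : b ∈ E) : dist a b ≤ S :=
    (edist_le_ofReal hS.le).mp ((Metric.edist_le_ediam_of_mem ha hb).trans hEdiam)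
  obtain ⟨_, hx₀, x₀, rfl⟩ : (E ∩ range (Sigma.mk n)).Nonempty := by
    by_contra! h
    rw [h, ncard_empty, Nat.cast_zero, mul_zero] at hcard
    exact hcard.not_ge (Nat.cast_nonneg _)
  have hEsub : E ⊆ range (Sigma.mk n) := by
    rintro ⟨m, y⟩ hy
    obtain rfl : m = n := by
      by_contra hm
      linarith [hN₁ n (le_max_left _ _) m hm x₀ y, hdistE hx₀ hy]
    exact mem_range_self y
  obtain ⟨E₀, rfl⟩ : ∃ E₀ : Finset (V n), Sigma.mk n '' E₀ = E :=
    ⟨(Sigma.mk n ⁻¹' E).toFinset, by simpa using image_preimage_eq_of_subset hEsub⟩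
  have hegirth : 2 * ⌊S⌋₊ + 2 < (G n).egirth :=
    lt_of_lt_of_le (by norm_cast; omega)
      ((hN₂ n (le_max_right _ _)).trans (G n).egirth.natCast_toNat_le_self)
  have hdiam (x) (hx : x ∈ E₀) (y) (hy : y ∈ E₀) : (G n).dist x y ≤ ⌊S⌋₊ :=
    Nat.le_floor (hmetric n x y ▸ hdistE (mem_image_of_mem _ hx) (mem_image_of_mem _ hy))
  have hlt := SimpleGraph.card_lt_card_outerBoundary (hconn n) hegirth
    ⟨x₀, by simpa using hx₀⟩ hdiam (fun x _ => hdeg n x)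
  have hbdry := card_outerBoundary_le_ncard_bdry_inter_range sigma_mk_injective (hmetric n) E₀
  rw [inter_eq_left.mpr (image_subset_range _ _),
    ncard_image_of_injective _ sigma_mk_injective, ncard_coe_finset, one_mul] at hcard
  exact_mod_cast (hcard.trans_le (by exact_mod_cast hlt.le.trans hbdry)).false

/-- Theorem 4.2 (large girth case): a space of graphs $X = \bigsqcup_n X_n$ with
$\mathrm{girth}(X_n) \to \infty$ and all vertex degrees at least three does not have
$ULA$.  The space of graphs is modelled as a sigma type with a metric restricting to the
graph metric on each piece, with the pieces drifting apart. -/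
theorem large_girth_not_ula {V : ℕ → Type*} [∀ n, Fintype (V n)]
    (G : ∀ n, SimpleGraph (V n)) [∀ n, DecidableRel (G n).Adj]
    (hconn : ∀ n, (G n).Connected)
    [MetricSpace (Σ n, V n)] (hbg : BoundedGeometry (Σ n, V n))
    (hmetric : ∀ (n : ℕ) (x y : V n),
      dist (⟨n, x⟩ : Σ n, V n) (⟨n, y⟩ : Σ n, V n) = (G n).dist x y)
    (hsep : ∀ D : ℝ, ∃ N : ℕ, ∀ n, N ≤ n → ∀ m, m ≠ n → ∀ (x : V n) (y : V m),
      D ≤ dist (⟨n, x⟩ : Σ n, V n) (⟨m, y⟩ : Σ n, V n))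
    (hgirth : ∀ k : ℕ, ∃ N : ℕ, ∀ n, N ≤ n → (k : ℕ∞) ≤ (G n).girth)
    (hdeg : ∀ (n : ℕ) (v : V n), 3 ≤ (G n).degree v) :
    ¬ ULA (Σ n, V n) :=
  large_girth_not_ula_general G hconn hmetric hsep hgirth hdeg
end

section
/- Let Γ be an infinite group generated by a finite symmetric set T, equipped with the word metric d_T(g,h) = min{n : g⁻¹h is a product of n elements of T}. Let Γ ≥ Γ₁ ≥ Γ₂ ≥ ⋯ be a decreasing sequence of finite index normal subgroups with ⋂_n Γ_n = {e}, and let X_n = Γ/Γ_n carry the word metric coming from the image of T. Let X be a bounded geometry metric space whose underlying set is ⊔_n X_n, whose metric restricts to the word metric on each X_n, and which satisfies d(X_n, X \ X_n) → ∞ as n → ∞ (a box space of Γ). If X has ULA, then Γ is amenable in the Block–Weinberger sense: for all R, ε > 0 there exists a finite nonempty subset E ⊆ Γ with |∂_R E| < ε·|E| (boundary taken with respect to the word metric on Γ). -/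
/-- The word length of $g$ with respect to a generating set $T$: the least number of
elements of $T$ whose product is $g$.  (With the word metric $d_T(g,h) =
\mathrm{wlen}_T(g^{-1}h)$.) -/
noncomputable def wlen {Γ : Type*} [Group Γ] (T : Finset Γ) (g : Γ) : ℕ :=
  sInf {n : ℕ | ∃ l : List Γ, (∀ t ∈ l, t ∈ T) ∧ l.prod = g ∧ l.length = n}

/-!
ULA applied with `F` the finite piece `Γ ⧸ Γₙ` gives a set `E₀` of diameter at most `S` whose
`R`-boundary inside `Γ ⧸ Γₙ` is small compared with `E₀ ∩ Γ ⧸ Γₙ`. Since the `Γₙ` decrease to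
`{1}` and word balls are finite, for large `n` no nontrivial element of `Γₙ` has length at most
`2 (S + R)`. The projection `Γ → Γ ⧸ Γₙ` is then 1-Lipschitz, lifts distances, and is injective
on `(S + R)`-balls, so `E₀ ∩ Γ ⧸ Γₙ` lifts to a set `E ⊆ Γ` of the same size whose `R`-boundary
injects into the `R`-boundary of `E₀` in `Γ ⧸ Γₙ`.
-/

open Filter Set

section WordMetric

variable {Γ : Type*} [Group Γ] {T : Finset Γ}

theorem wlen_le_length {g : Γ} {l : List Γ} (hl : ∀ t ∈ l, t ∈ T) (hprod : l.prod = g) :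
    wlen T g ≤ l.length :=
  Nat.sInf_le ⟨l, hl, hprod, rfl⟩

theorem wlen_one : wlen T (1 : Γ) = 0 :=
  Nat.le_zero.mp (wlen_le_length (l := []) (by simp) rfl)

theorem exists_word_length_eq_wlen (hsym : ∀ t ∈ T, t⁻¹ ∈ T)
    (hgen : Subgroup.closure (T : Set Γ) = ⊤) (g : Γ) :
    ∃ l : List Γ, (∀ t ∈ l, t ∈ T) ∧ l.prod = g ∧ l.length = wlen T g := by
  suffices h : {n | ∃ l : List Γ, (∀ t ∈ l, t ∈ T) ∧ l.prod = g ∧ l.length = n}.Nonempty from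
    Nat.sInf_mem h
  have hg : g ∈ (Subgroup.closure (T : Set Γ)).toSubmonoid := by rw [hgen]; trivial
  rw [Subgroup.closure_toSubmonoid] at hg
  obtain ⟨l, hl, rfl⟩ := Submonoid.exists_list_of_mem_closure hg
  refine ⟨l.length, l, fun t ht => ?_, rfl, rfl⟩
  rcases hl t ht with h | h
  · exact h
  · simpa using hsym t⁻¹ h

theorem wlen_mul_le (hsym : ∀ t ∈ T, t⁻¹ ∈ T) (hgen : Subgroup.closure (T : Set Γ) = ⊤)
    (g h : Γ) : wlen T (g * h) ≤ wlen T g + wlen T h := by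
  obtain ⟨l, hl, rfl, hlen⟩ := exists_word_length_eq_wlen hsym hgen g
  obtain ⟨m, hm, rfl, hmlen⟩ := exists_word_length_eq_wlen hsym hgen h
  rw [← hlen, ← hmlen, ← List.length_append]
  refine wlen_le_length (fun t ht => ?_) List.prod_append
  rcases List.mem_append.mp ht with h | h
  exacts [hl t h, hm t h]

theorem wlen_inv_le (hsym : ∀ t ∈ T, t⁻¹ ∈ T) (hgen : Subgroup.closure (T : Set Γ) = ⊤)
    (g : Γ) : wlen T g⁻¹ ≤ wlen T g := by
  obtain ⟨l, hl, rfl, hlen⟩ := exists_word_length_eq_wlen hsym hgen g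
  calc wlen T l.prod⁻¹ ≤ (l.map (·⁻¹)).reverse.length :=
        wlen_le_length (fun t ht => ?_) (List.prod_inv_reverse l).symm
    _ = wlen T l.prod := by rw [List.length_reverse, List.length_map, hlen]
  obtain ⟨a, ha, rfl⟩ := List.mem_map.mp (List.mem_reverse.mp ht)
  exact hsym a (hl a ha)

theorem wlen_inv (hsym : ∀ t ∈ T, t⁻¹ ∈ T) (hgen : Subgroup.closure (T : Set Γ) = ⊤)
    (g : Γ) : wlen T g⁻¹ = wlen T g :=
  le_antisymm (wlen_inv_le hsym hgen g) (by simpa using wlen_inv_le hsym hgen g⁻¹)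

theorem finite_setOf_wlen_le (hsym : ∀ t ∈ T, t⁻¹ ∈ T)
    (hgen : Subgroup.closure (T : Set Γ) = ⊤) (r : ℝ) :
    {g : Γ | (wlen T g : ℝ) ≤ r}.Finite := by
  refine ((List.finite_length_le T ⌊r⌋₊).image fun l => (l.map Subtype.val).prod).subset ?_
  intro g hg
  obtain ⟨l, hl, hprod, hlen⟩ := exists_word_length_eq_wlen hsym hgen g
  refine ⟨l.attach.map fun x => ⟨x.1, hl x.1 x.2⟩, ?_, by simpa [Function.comp_def] using hprod⟩
  simpa [hlen] using Nat.le_floor hg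

noncomputable def wdist (T : Finset Γ) (g h : Γ) : ℝ := wlen T (g⁻¹ * h)

theorem wdist_self (g : Γ) : wdist T g g = 0 := by
  simp [wdist, wlen_one]

theorem wdist_comm (hsym : ∀ t ∈ T, t⁻¹ ∈ T) (hgen : Subgroup.closure (T : Set Γ) = ⊤)
    (g h : Γ) : wdist T g h = wdist T h g := by
  rw [wdist, wdist, ← wlen_inv hsym hgen, mul_inv_rev, inv_inv]

theorem wdist_triangle (hsym : ∀ t ∈ T, t⁻¹ ∈ T) (hgen : Subgroup.closure (T : Set Γ) = ⊤)
    (g h k : Γ) : wdist T g k ≤ wdist T g h + wdist T h k := by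
  have := wlen_mul_le hsym hgen (g⁻¹ * h) (h⁻¹ * k)
  rw [show g⁻¹ * h * (h⁻¹ * k) = g⁻¹ * k by group] at this
  unfold wdist
  exact_mod_cast this

theorem finite_setOf_wdist_le (hsym : ∀ t ∈ T, t⁻¹ ∈ T)
    (hgen : Subgroup.closure (T : Set Γ) = ⊤) (g₀ : Γ) (r : ℝ) :
    {g : Γ | wdist T g₀ g ≤ r}.Finite :=
  (finite_setOf_wlen_le hsym hgen r).preimage (mul_right_injective g₀⁻¹).injOn

def wbdry (T : Finset Γ) (R : ℝ) (E : Set Γ) : Set Γ :=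
  {y | y ∉ E ∧ ∃ e ∈ E, wdist T y e ≤ R}

/-- Word length in `Γ ⧸ H` of the coset of `x`, for the image of `T`. -/
noncomputable def cosetLen (T : Finset Γ) (H : Subgroup Γ) (x : Γ) : ℕ :=
  sInf {k : ℕ | ∃ γ ∈ H, ∃ l : List Γ, (∀ t ∈ l, t ∈ T) ∧ l.prod = x * γ ∧ l.length = k}

theorem cosetLen_le_wlen (hsym : ∀ t ∈ T, t⁻¹ ∈ T) (hgen : Subgroup.closure (T : Set Γ) = ⊤)
    (H : Subgroup Γ) (x : Γ) : cosetLen T H x ≤ wlen T x := by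
  obtain ⟨l, hl, hprod, hlen⟩ := exists_word_length_eq_wlen hsym hgen x
  exact Nat.sInf_le ⟨1, H.one_mem, l, hl, by rw [mul_one, hprod], hlen⟩

theorem exists_wlen_mul_le_cosetLen (hsym : ∀ t ∈ T, t⁻¹ ∈ T)
    (hgen : Subgroup.closure (T : Set Γ) = ⊤) (H : Subgroup Γ) (x : Γ) :
    ∃ γ ∈ H, wlen T (x * γ) ≤ cosetLen T H x := by
  obtain ⟨l, hl, hprod, -⟩ := exists_word_length_eq_wlen hsym hgen x
  obtain ⟨γ, hγ, m, hm, hmprod, hmlen⟩ :=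
    Nat.sInf_mem (s := {k : ℕ | ∃ γ ∈ H, ∃ l : List Γ, (∀ t ∈ l, t ∈ T) ∧ l.prod = x * γ ∧
      l.length = k}) ⟨l.length, 1, H.one_mem, l, hl, by rw [mul_one, hprod], rfl⟩
  exact ⟨γ, hγ, (wlen_le_length hm hmprod).trans hmlen.le⟩

end WordMetric

theorem Subgroup.eventually_forall_mem_eq_one {G ι : Type*} [Group G] [Preorder ι]
    {H : ι → Subgroup G} (hanti : Antitone H) (htriv : ⨅ i, H i = ⊥) {A : Set G}
    (hA : A.Finite) : ∀ᶠ i in atTop, ∀ g ∈ A, g ∈ H i → g = 1 := by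
  refine hA.eventually_all.2 fun g _ => ?_
  by_cases hg : g = 1
  · exact Eventually.of_forall fun _ _ => hg
  obtain ⟨j, hj⟩ : ∃ j, g ∉ H j := by
    by_contra! h
    exact hg ((Subgroup.mem_bot).mp (htriv ▸ Subgroup.mem_iInf.mpr h))
  exact (eventually_ge_atTop j).mono fun i hji hgi => absurd (hanti hji hgi) hj

section Quotient

variable {Γ : Type*} [Group Γ] {T : Finset Γ} {H : Subgroup Γ}
  {X : Type*} [MetricSpace X] {ι : Γ ⧸ H → X}

theorem dist_mk_le_wdist (hsym : ∀ t ∈ T, t⁻¹ ∈ T) (hgen : Subgroup.closure (T : Set Γ) = ⊤)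
    (hd : ∀ g h : Γ, dist (ι g) (ι h) = cosetLen T H (g⁻¹ * h)) (g h : Γ) :
    dist (ι g) (ι h) ≤ wdist T g h := by
  rw [hd, wdist]
  exact_mod_cast cosetLen_le_wlen hsym hgen H (g⁻¹ * h)

theorem exists_wdist_le_dist_mk (hsym : ∀ t ∈ T, t⁻¹ ∈ T)
    (hgen : Subgroup.closure (T : Set Γ) = ⊤)
    (hd : ∀ g h : Γ, dist (ι g) (ι h) = cosetLen T H (g⁻¹ * h)) (g h : Γ) :
    ∃ h' : Γ, (h' : Γ ⧸ H) = h ∧ wdist T g h' ≤ dist (ι g) (ι h) := by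
  obtain ⟨γ, hγ, hle⟩ := exists_wlen_mul_le_cosetLen hsym hgen H (g⁻¹ * h)
  refine ⟨h * γ, QuotientGroup.mk_mul_of_mem h hγ, ?_⟩
  rw [hd, wdist, ← mul_assoc]
  exact_mod_cast hle

theorem eq_of_mk_eq_of_wdist_le {r : ℝ} (hH : ∀ γ, (wlen T γ : ℝ) ≤ r → γ ∈ H → γ = 1)
    {g h : Γ} (hgh : (g : Γ ⧸ H) = h) (hd : wdist T g h ≤ r) : g = h :=
  inv_mul_eq_one.mp (hH _ hd (QuotientGroup.eq.mp hgh))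

end Quotient

theorem exists_lift_ncard_wbdry_le {Γ X : Type*} [Group Γ] [MetricSpace X] {T : Finset Γ}
    (hsym : ∀ t ∈ T, t⁻¹ ∈ T) (hgen : Subgroup.closure (T : Set Γ) = ⊤)
    {f : Γ → X} {R S : ℝ} (hR : 0 ≤ R)
    (hlip : ∀ g h, dist (f g) (f h) ≤ wdist T g h)
    (hlift : ∀ g h, ∃ h', f h' = f h ∧ wdist T g h' ≤ dist (f g) (f h))
    (hinj : ∀ g h, wdist T g h ≤ 2 * (S + R) → f g = f h → g = h)
    (hfin : (range f).Finite) {E₀ : Set X} (hdiam : ∀ x ∈ E₀, ∀ y ∈ E₀, dist x y ≤ S)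
    (hne : (E₀ ∩ range f).Nonempty) :
    ∃ E : Set Γ, E.Finite ∧ E.Nonempty ∧ E.ncard = (E₀ ∩ range f).ncard ∧
      (wbdry T R E).ncard ≤ (bdry R E₀ ∩ range f).ncard := by
  obtain ⟨_, hx₀, g₀, rfl⟩ := hne
  set B : Set Γ := {g | wdist T g₀ g ≤ S + R}
  have hinjB : InjOn f B := fun g hg h hh => hinj g h <| by
    have := wdist_triangle hsym hgen g g₀ h
    rw [wdist_comm hsym hgen g g₀] at this
    linarith [hg.out, hh.out]
  set E : Set Γ := {g | f g ∈ E₀ ∧ wdist T g₀ g ≤ S}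
  have hEB : E ⊆ B := fun g hg => hg.2.trans (le_add_of_nonneg_right hR)
  have hEimage : f '' E = E₀ ∩ range f := by
    ext x
    constructor
    · rintro ⟨g, hg, rfl⟩
      exact ⟨hg.1, g, rfl⟩
    · rintro ⟨hx, h, rfl⟩
      obtain ⟨h', hfh', hd⟩ := hlift g₀ h
      exact ⟨h', ⟨hfh' ▸ hx, hd.trans (hdiam _ hx₀ _ hx)⟩, hfh'⟩
  have hbdryB : wbdry T R E ⊆ B := by
    rintro y ⟨-, e, he, hey⟩
    have := wdist_triangle hsym hgen g₀ e y
    rw [wdist_comm hsym hgen e] at this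
    exact this.trans (add_le_add he.2 hey)
  have hmaps : MapsTo f (wbdry T R E) (bdry R E₀ ∩ range f) := by
    intro y hy
    obtain ⟨hyE, e, he, hey⟩ := hy
    refine ⟨⟨⟨f e, he.1, (hlip y e).trans hey⟩, fun hfy => hyE ?_⟩, y, rfl⟩
    obtain ⟨e', he', hfe'⟩ : f y ∈ f '' E := hEimage ▸ ⟨hfy, y, rfl⟩
    rwa [hinjB (hEB he') (hbdryB ⟨hyE, e, he, hey⟩) hfe'] at he'
  have hS : 0 ≤ S := dist_nonneg.trans (hdiam _ hx₀ _ hx₀)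
  refine ⟨E, (finite_setOf_wdist_le hsym hgen g₀ S).subset fun g hg => hg.2,
    ⟨g₀, hx₀, (wdist_self g₀).trans_le hS⟩, ?_, ?_⟩
  · rw [← hEimage, (hinjB.mono hEB).ncard_image]
  · exact ncard_le_ncard_of_injOn f hmaps (hinjB.mono hbdryB) (hfin.subset inter_subset_right)

theorem box_space_ula_implies_amenable_general {Γ : Type*} [Group Γ]
    (T : Finset Γ) (hsym : ∀ t ∈ T, t⁻¹ ∈ T)
    (hgen : Subgroup.closure (T : Set Γ) = ⊤)
    (Γs : ℕ → Subgroup Γ)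
    (hfi : ∀ n, (Γs n).FiniteIndex) (hdec : ∀ n, Γs (n + 1) ≤ Γs n)
    (hint : (⨅ n, Γs n) = ⊥)
    [MetricSpace (Σ n, Γ ⧸ Γs n)]
    (hmetric : ∀ (n : ℕ) (g h : Γ),
      dist (⟨n, QuotientGroup.mk g⟩ : Σ n, Γ ⧸ Γs n) (⟨n, QuotientGroup.mk h⟩ : Σ n, Γ ⧸ Γs n)
        = (sInf {k : ℕ | ∃ γ ∈ Γs n, ∃ l : List Γ,
            (∀ t ∈ l, t ∈ T) ∧ l.prod = g⁻¹ * h * γ ∧ l.length = k} : ℕ))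
    (hULA : ULA (Σ n, Γ ⧸ Γs n)) :
    ∀ R : ℝ, 0 < R → ∀ ε : ℝ, 0 < ε → ∃ E : Set Γ, E.Finite ∧ E.Nonempty ∧
      (({y : Γ | y ∉ E ∧ ∃ e ∈ E, (wlen T (y⁻¹ * e) : ℝ) ≤ R}).ncard : ℝ)
        < ε * (E.ncard : ℝ) := by
  intro R hR ε hε
  obtain ⟨S, hS, hULA⟩ := hULA R hR ε hε
  obtain ⟨n, hn⟩ := (Subgroup.eventually_forall_mem_eq_one (antitone_nat_of_succ_le hdec) hint
    (finite_setOf_wlen_le hsym hgen (2 * (S + R)))).exists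
  have := hfi n
  let f : Γ → Σ n, Γ ⧸ Γs n := fun g => ⟨n, g⟩
  have hlift : ∀ g h, ∃ h', f h' = f h ∧ wdist T g h' ≤ dist (f g) (f h) := fun g h =>
    (exists_wdist_le_dist_mk hsym hgen (hmetric n) g h).imp fun _ hh' =>
      ⟨congrArg (Sigma.mk n) hh'.1, hh'.2⟩
  have hinj : ∀ g h, wdist T g h ≤ 2 * (S + R) → f g = f h → g = h := fun g h hgh hfgh =>
    eq_of_mk_eq_of_wdist_le hn (sigma_mk_injective (β := fun m => Γ ⧸ Γs m) hfgh) hgh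
  have hF : (range f).Finite :=
    (finite_range (Sigma.mk (β := fun m => Γ ⧸ Γs m) n)).subset (range_comp_subset_range _ _)
  obtain ⟨E₀, -, hdiam, hcount⟩ := hULA (range f) hF
  have hne : (E₀ ∩ range f).Nonempty := by
    by_contra! h
    rw [h, ncard_empty, Nat.cast_zero, mul_zero] at hcount
    exact (Nat.cast_nonneg _).not_gt hcount
  obtain ⟨E, hEfin, hEne, hcard, hbdry⟩ := exists_lift_ncard_wbdry_le hsym hgen hR.le
    (dist_mk_le_wdist hsym hgen (hmetric n)) hlift hinj hF
    (fun x hx y hy =>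
      (edist_le_ofReal hS.le).mp ((Metric.edist_le_ediam_of_mem hx hy).trans hdiam)) hne
  refine ⟨E, hEfin, hEne, ?_⟩
  calc ((wbdry T R E).ncard : ℝ) ≤ (bdry R E₀ ∩ range f).ncard := by exact_mod_cast hbdry
    _ < ε * (E₀ ∩ range f).ncard := hcount
    _ = ε * E.ncard := by rw [hcard]

/-- Part of Theorem 4.4: if a box space $\bigsqcup_n \Gamma/\Gamma_n$ of a finitely
generated infinite group $\Gamma$ has $ULA$, then $\Gamma$ is amenable in the sense of
Block and Weinberger for its word metric.  The box space is modelled as a sigma type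
whose metric restricts on each piece $\Gamma/\Gamma_n$ to the quotient word metric coming
from the image of the generating set $T$, with the pieces drifting apart. -/
theorem box_space_ula_implies_amenable {Γ : Type*} [Group Γ] [Infinite Γ]
    (T : Finset Γ) (hsym : ∀ t ∈ T, t⁻¹ ∈ T)
    (hgen : Subgroup.closure (T : Set Γ) = ⊤)
    (Γs : ℕ → Subgroup Γ) (hnorm : ∀ n, (Γs n).Normal)
    (hfi : ∀ n, (Γs n).FiniteIndex) (hdec : ∀ n, Γs (n + 1) ≤ Γs n)
    (hint : (⨅ n, Γs n) = ⊥)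
    [MetricSpace (Σ n, Γ ⧸ Γs n)] (hbg : BoundedGeometry (Σ n, Γ ⧸ Γs n))
    (hmetric : ∀ (n : ℕ) (g h : Γ),
      dist (⟨n, QuotientGroup.mk g⟩ : Σ n, Γ ⧸ Γs n) (⟨n, QuotientGroup.mk h⟩ : Σ n, Γ ⧸ Γs n)
        = (sInf {k : ℕ | ∃ γ ∈ Γs n, ∃ l : List Γ,
            (∀ t ∈ l, t ∈ T) ∧ l.prod = g⁻¹ * h * γ ∧ l.length = k} : ℕ))
    (hsep : ∀ D : ℝ, ∃ N : ℕ, ∀ n, N ≤ n → ∀ m, m ≠ n →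
      ∀ (x : Γ ⧸ Γs n) (y : Γ ⧸ Γs m),
        D ≤ dist (⟨n, x⟩ : Σ n, Γ ⧸ Γs n) (⟨m, y⟩ : Σ n, Γ ⧸ Γs n))
    (hULA : ULA (Σ n, Γ ⧸ Γs n)) :
    ∀ R : ℝ, 0 < R → ∀ ε : ℝ, 0 < ε → ∃ E : Set Γ, E.Finite ∧ E.Nonempty ∧
      (({y : Γ | y ∉ E ∧ ∃ e ∈ E, (wlen T (y⁻¹ * e) : ℝ) ≤ R}).ncard : ℝ)
        < ε * (E.ncard : ℝ) :=
  box_space_ula_implies_amenable_general T hsym hgen Γs hfi hdec hint hmetric hULA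
end

section
/- Let X be a bounded geometry metric space which is amenable in the Block–Weinberger sense and has WMSP(c,f) for some c > 0 and non-decreasing f : ℕ → ℕ. Then for every R ∈ ℕ there exists a finite nonempty subset E ⊆ X such that diam(E) ≤ f(2R) and |N_R(E)| ≤ (2/c)·|E|. -/
open scoped ENNReal

/-- Block–Weinberger amenability of a metric space. -/
def BWAmenable (X : Type*) [MetricSpace X] : Prop :=
  ∀ R : ℝ, 0 < R → ∀ ε : ℝ, 0 < ε → ∃ E : Set X, E.Finite ∧ E.Nonempty ∧
    ((bdry R E).ncard : ℝ) < ε * (E.ncard : ℝ)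

/-- The weak metric sparsification property with constant `c` and control function `f`. -/
def WMSP (X : Type*) [MetricSpace X] (c : ℝ) (f : ℕ → ℕ) : Prop :=
  ∀ (R : ℕ) (F : Set X), F.Finite →
    ∃ (ι : Type) (Ω : ι → Set X),
      (∀ i, Ω i ⊆ F) ∧
      (∀ i, EMetric.diam (Ω i) ≤ (f R : ℝ≥0∞)) ∧
      (∀ i j, i ≠ j → ∀ a ∈ Ω i, ∀ b ∈ Ω j, (R : ℝ) < dist a b) ∧
      c * (F.ncard : ℝ) ≤ ((⋃ i, Ω i).ncard : ℝ)

/-- Lemma 5.6: if a bounded geometry metric space is amenable in the Block–Weinberger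
sense and has $WMSP(c, f)$, then for every $R \in \mathbb N$ there is a finite nonempty
set $E$ with $\mathrm{diam}(E) \leq f(2R)$ and $|N_R(E)| \leq (2/c)|E|$. -/
theorem wmsp_amenable_folner {X : Type*} [MetricSpace X] (hbg : BoundedGeometry X)
    (hamen : BWAmenable X) (c : ℝ) (hc : 0 < c) (f : ℕ → ℕ) (hf : Monotone f)
    (hwmsp : WMSP X c f) :
    ∀ R : ℕ, ∃ E : Set X, E.Finite ∧ E.Nonempty ∧
      EMetric.diam E ≤ (f (2 * R) : ℝ≥0∞) ∧
      ((nbhd (R : ℝ) E).ncard : ℝ) ≤ (2 / c) * (E.ncard : ℝ) := by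
  intro R
  obtain ⟨F, hFfin, hFne, hFb⟩ := hamen ((R : ℝ) + 1) (by positivity) 1 one_pos
  obtain ⟨ι, Ω, hsub, hdiam, hsep, hcard⟩ := hwmsp (2 * R) F hFfin
  have hΩfin : ∀ i, (Ω i).Finite := fun i => hFfin.subset (hsub i)
  obtain ⟨N, hN⟩ := hbg ((R : ℝ) + 1) (by positivity)
  -- neighbourhoods of subsets of F are finite
  have hNfin : ∀ E : Set X, E ⊆ F → (nbhd (R : ℝ) E).Finite := by
    intro E hE
    have hsubN : nbhd (R : ℝ) E ⊆ ⋃ e ∈ F, {y | dist e y ≤ (R : ℝ) + 1} := by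
      rintro y ⟨e, heE, hye⟩
      exact Set.mem_biUnion (hE heE) (by
        simp only [Set.mem_setOf_eq, dist_comm]
        linarith)
    exact (hFfin.biUnion (fun e _ => (hN e).1)).subset hsubN
  -- Ω i's are pairwise disjoint
  have hΩdisj : ∀ i j, i ≠ j → Disjoint (Ω i) (Ω j) := by
    intro i j hij
    rw [Set.disjoint_left]
    intro x hxi hxj
    have h := hsep i j hij x hxi x hxj
    rw [dist_self] at h
    exact absurd h (Nat.cast_nonneg _).not_gt
  -- neighbourhoods are pairwise disjoint
  have hNdisj : ∀ i j, i ≠ j →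
      Disjoint (nbhd (R : ℝ) (Ω i)) (nbhd (R : ℝ) (Ω j)) := by
    intro i j hij
    rw [Set.disjoint_left]
    rintro y ⟨a, ha, hya⟩ ⟨b, hb, hyb⟩
    have h := hsep i j hij a ha b hb
    have ht : dist a b ≤ dist a y + dist y b := dist_triangle a y b
    have h1 : dist a y ≤ (R : ℝ) := by rw [dist_comm]; exact hya
    push_cast at h
    linarith
  have hUfin : (⋃ i, Ω i).Finite := hFfin.subset (Set.iUnion_subset hsub)
  -- the set of indices with nonempty piece is finite
  set s : Set ι := {i | (Ω i).Nonempty} with hs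
  have hsfin : s.Finite := by
    have : Finite ↥(⋃ i, Ω i) := hUfin
    refine Set.finite_coe_iff.mp (Finite.of_injective
      (fun i : s => (⟨i.2.choose, Set.mem_iUnion.mpr ⟨i.1, i.2.choose_spec⟩⟩ :
        ↥(⋃ i, Ω i))) ?_)
    intro a b hab
    by_contra hne
    have hne' : (a : ι) ≠ (b : ι) := fun h => hne (Subtype.ext h)
    have hmem : a.2.choose = b.2.choose := congrArg Subtype.val hab
    have h := hsep a.1 b.1 hne' a.2.choose a.2.choose_spec
      b.2.choose (hmem ▸ b.2.choose_spec)
    rw [hmem, dist_self] at h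
    exact absurd h (Nat.cast_nonneg _).not_gt
  classical
  set sF : Finset ι := hsfin.toFinset with hsF
  set T : ι → Finset X := fun i => (hΩfin i).toFinset with hT
  set TN : ι → Finset X := fun i => (hNfin (Ω i) (hsub i)).toFinset with hTN
  -- card of the union of the Ω i
  have hUeq : (⋃ i, Ω i) = ↑(sF.biUnion T) := by
    ext x
    simp only [Set.mem_iUnion, Finset.coe_biUnion, Finset.mem_coe, hsF,
      Set.Finite.mem_toFinset, hs, Set.mem_setOf_eq, hT, Set.Finite.coe_toFinset,
      Set.mem_iUnion]
    constructor
    · rintro ⟨i, hi⟩; exact ⟨i, ⟨x, hi⟩, hi⟩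
    · rintro ⟨i, _, hi⟩; exact ⟨i, hi⟩
  have hTdisj : ∀ i ∈ sF, ∀ j ∈ sF, i ≠ j → Disjoint (T i) (T j) := by
    intro i _ j _ hij
    simpa [hT, Set.Finite.disjoint_toFinset] using hΩdisj i j hij
  have hUcard : ((⋃ i, Ω i).ncard : ℝ) = ∑ i ∈ sF, ((Ω i).ncard : ℝ) := by
    rw [hUeq, Set.ncard_coe_finset, Finset.card_biUnion hTdisj]
    push_cast
    exact Finset.sum_congr rfl fun i _ => by
      rw [Set.ncard_eq_toFinset_card (Ω i) (hΩfin i)]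
  -- card of the union of the neighbourhoods
  have hTNdisj : ∀ i ∈ sF, ∀ j ∈ sF, i ≠ j → Disjoint (TN i) (TN j) := by
    intro i _ j _ hij
    simpa [hTN, Set.Finite.disjoint_toFinset] using hNdisj i j hij
  have hNFfin : (nbhd (R : ℝ) F).Finite := hNfin F subset_rfl
  have hNUsub : ↑(sF.biUnion TN) ⊆ nbhd (R : ℝ) F := by
    intro x hx
    simp only [Finset.coe_biUnion, Set.mem_iUnion, Finset.mem_coe, hTN,
      Set.Finite.mem_toFinset] at hx
    obtain ⟨i, _, e, he, hxe⟩ := hx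
    exact ⟨e, hsub i he, hxe⟩
  have hNsum : ∑ i ∈ sF, ((nbhd (R : ℝ) (Ω i)).ncard : ℝ)
      ≤ ((nbhd (R : ℝ) F).ncard : ℝ) := by
    have h1 : (sF.biUnion TN).card ≤ (nbhd (R : ℝ) F).ncard := by
      rw [← Set.ncard_coe_finset]
      exact Set.ncard_le_ncard hNUsub hNFfin
    rw [Finset.card_biUnion hTNdisj] at h1
    calc ∑ i ∈ sF, ((nbhd (R : ℝ) (Ω i)).ncard : ℝ)
        = ((∑ i ∈ sF, (TN i).card : ℕ) : ℝ) := by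
          push_cast
          exact Finset.sum_congr rfl fun i _ => by
            rw [Set.ncard_eq_toFinset_card (nbhd (R : ℝ) (Ω i)) (hNfin (Ω i) (hsub i))]
      _ ≤ _ := by exact_mod_cast h1
  -- N_R(F) ⊆ F ∪ ∂_{R+1} F
  have hNFsub : nbhd (R : ℝ) F ⊆ F ∪ bdry ((R : ℝ) + 1) F := by
    rintro y ⟨e, he, hye⟩
    by_cases hy : y ∈ F
    · exact Or.inl hy
    · exact Or.inr ⟨⟨e, he, by linarith⟩, hy⟩
  have hNFcard : ((nbhd (R : ℝ) F).ncard : ℝ)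
      ≤ (F.ncard : ℝ) + ((bdry ((R : ℝ) + 1) F).ncard : ℝ) := by
    have hbfin : (bdry ((R : ℝ) + 1) F).Finite := by
      have : bdry ((R : ℝ) + 1) F ⊆ ⋃ e ∈ F, {y | dist e y ≤ (R : ℝ) + 1} := by
        rintro y ⟨⟨e, he, hye⟩, -⟩
        exact Set.mem_biUnion he (by simpa [dist_comm] using hye)
      exact (hFfin.biUnion (fun e _ => (hN e).1)).subset this
    have h1 : (nbhd (R : ℝ) F).ncard ≤ (F ∪ bdry ((R : ℝ) + 1) F).ncard :=
      Set.ncard_le_ncard hNFsub (hFfin.union hbfin)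
    have h2 := Set.ncard_union_le F (bdry ((R : ℝ) + 1) F)
    exact_mod_cast h1.trans h2
  -- pigeonhole
  have hsum : ∑ i ∈ sF, ((nbhd (R : ℝ) (Ω i)).ncard : ℝ)
      < ∑ i ∈ sF, (2 / c) * ((Ω i).ncard : ℝ) := by
    have h5 : c * (F.ncard : ℝ) ≤ ∑ i ∈ sF, ((Ω i).ncard : ℝ) := hUcard ▸ hcard
    have h6 : 2 * (F.ncard : ℝ) ≤ (2 / c) * ∑ i ∈ sF, ((Ω i).ncard : ℝ) := by
      have hmul := mul_le_mul_of_nonneg_left h5 (by positivity : (0:ℝ) ≤ 2 / c)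
      calc 2 * (F.ncard : ℝ) = (2 / c) * (c * (F.ncard : ℝ)) := by
            field_simp
        _ ≤ _ := hmul
    rw [← Finset.mul_sum]
    have h7 : (0:ℝ) < (F.ncard : ℝ) := by
      exact_mod_cast (Set.ncard_pos hFfin).mpr hFne
    linarith [hNsum, hNFcard, hFb]
  obtain ⟨i, hi, hlt⟩ := Finset.exists_lt_of_sum_lt hsum
  refine ⟨Ω i, hΩfin i, ?_, hdiam i, hlt.le⟩
  rw [hsF] at hi
  exact (hsfin.mem_toFinset).mp hi
end

section
/- Let F be a finite subset of a metric space, let R > 0, and let N ∈ ℕ be such that |{y ∈ F : d(x,y) ≤ R}| ≤ N for all x ∈ F. Let ψ : F → ℂ satisfy ∑_{x ∈ F} |ψ(x)|² = 1, and define φ : F → ℝ by φ(x) = |ψ(x)|². Then ∑_{x ∈ F} ∑_{y ∈ F, d(x,y) ≤ R} |φ(x) − φ(y)| ≤ 2·√N · ( ∑_{x ∈ F} ∑_{y ∈ F, d(x,y) ≤ R} |ψ(x) − ψ(y)|² )^{1/2}. -/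
/-- The key Cauchy–Schwarz estimate in the proof of Theorem 3.12: for a finite subset `F`
of a metric space in which `R`-balls in `F` have at most `N` points, and an `ℓ²`-normalised
function `ψ` on `F`, the `ℓ¹`-variation of `φ = |ψ|²` over pairs of points of `F` at
distance at most `R` is controlled by `2√N` times the square root of the corresponding
`ℓ²`-Laplacian quantity for `ψ`. -/
theorem cauchy_schwarz_variation {X : Type*} [MetricSpace X] (F : Finset X)
    (R : ℝ) (hR : 0 < R) (N : ℕ)
    (hN : ∀ x ∈ F, (F.filter fun y => dist x y ≤ R).card ≤ N)
    (ψ : X → ℂ) (hψ : ∑ x ∈ F, ‖ψ x‖ ^ 2 = 1)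
    (φ : X → ℝ) (hφ : ∀ x, φ x = ‖ψ x‖ ^ 2) :
    ∑ x ∈ F, ∑ y ∈ F.filter fun y => dist x y ≤ R, |φ x - φ y|
      ≤ 2 * Real.sqrt N *
        Real.sqrt (∑ x ∈ F, ∑ y ∈ F.filter fun y => dist x y ≤ R, ‖ψ x - ψ y‖ ^ 2) := by
  set S : Finset (X × X) :=
    (F ×ˢ F).filter (fun p => dist p.1 p.2 ≤ R) with hS
  have hsum : ∀ (g : X → X → ℝ),
      (∑ x ∈ F, ∑ y ∈ F.filter fun y => dist x y ≤ R, g x y)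
        = ∑ p ∈ S, g p.1 p.2 := by
    intro g
    rw [hS, Finset.sum_filter, Finset.sum_product]
    simp [Finset.sum_filter]
  -- pointwise bound
  have key : ∀ x y : X, |φ x - φ y| ≤ ‖ψ x - ψ y‖ * (‖ψ x‖ + ‖ψ y‖) := by
    intro x y
    rw [hφ, hφ]
    have h1 : ‖ψ x‖ ^ 2 - ‖ψ y‖ ^ 2 = (‖ψ x‖ - ‖ψ y‖) * (‖ψ x‖ + ‖ψ y‖) := by ring
    rw [h1, abs_mul, abs_of_nonneg (by positivity : (0:ℝ) ≤ ‖ψ x‖ + ‖ψ y‖)]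
    gcongr
    exact abs_norm_sub_norm_le _ _
  set A : ℝ := ∑ x ∈ F, ∑ y ∈ F.filter fun y => dist x y ≤ R, ‖ψ x - ψ y‖ ^ 2 with hA
  have hApos : 0 ≤ A :=
    Finset.sum_nonneg fun _ _ => Finset.sum_nonneg fun _ _ => sq_nonneg _
  set B : ℝ := ∑ p ∈ S, (‖ψ p.1‖ + ‖ψ p.2‖) ^ 2 with hB
  have hBpos : 0 ≤ B := Finset.sum_nonneg fun _ _ => sq_nonneg _
  -- step 1 : LHS ≤ ∑_S ‖ψx-ψy‖(‖ψx‖+‖ψy‖)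
  have step1 : (∑ x ∈ F, ∑ y ∈ F.filter fun y => dist x y ≤ R, |φ x - φ y|)
      ≤ ∑ p ∈ S, ‖ψ p.1 - ψ p.2‖ * (‖ψ p.1‖ + ‖ψ p.2‖) := by
    rw [hsum (fun x y => |φ x - φ y|)]
    exact Finset.sum_le_sum fun p _ => key p.1 p.2
  -- Cauchy-Schwarz
  have CS : (∑ p ∈ S, ‖ψ p.1 - ψ p.2‖ * (‖ψ p.1‖ + ‖ψ p.2‖)) ≤ Real.sqrt A * Real.sqrt B := by
    have h := Finset.sum_mul_sq_le_sq_mul_sq S (fun p => ‖ψ p.1 - ψ p.2‖)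
      (fun p => ‖ψ p.1‖ + ‖ψ p.2‖)
    have hA' : (∑ p ∈ S, ‖ψ p.1 - ψ p.2‖ ^ 2) = A := by
      rw [hA, hsum (fun x y => ‖ψ x - ψ y‖ ^ 2)]
    have hnn : 0 ≤ ∑ p ∈ S, ‖ψ p.1 - ψ p.2‖ * (‖ψ p.1‖ + ‖ψ p.2‖) :=
      Finset.sum_nonneg fun p _ => mul_nonneg (norm_nonneg _) (by positivity)
    calc (∑ p ∈ S, ‖ψ p.1 - ψ p.2‖ * (‖ψ p.1‖ + ‖ψ p.2‖))
        = Real.sqrt ((∑ p ∈ S, ‖ψ p.1 - ψ p.2‖ * (‖ψ p.1‖ + ‖ψ p.2‖)) ^ 2) :=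
          (Real.sqrt_sq hnn).symm
      _ ≤ Real.sqrt (A * B) := by
          apply Real.sqrt_le_sqrt
          rw [← hA', hB]
          exact h
      _ = Real.sqrt A * Real.sqrt B := Real.sqrt_mul hApos B
  -- bound B ≤ 4N
  have hB4N : B ≤ 4 * N := by
    have h1 : B ≤ ∑ p ∈ S, (2 * ‖ψ p.1‖ ^ 2 + 2 * ‖ψ p.2‖ ^ 2) := by
      rw [hB]
      apply Finset.sum_le_sum
      intro p _
      nlinarith [sq_nonneg (‖ψ p.1‖ - ‖ψ p.2‖)]
    have hcard : ∀ x ∈ F, ((F ×ˢ F).filter (fun p => dist p.1 p.2 ≤ R)).card ≤ N * F.card ∨ True := by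
      intro _ _; right; trivial
    have hx : (∑ p ∈ S, ‖ψ p.1‖ ^ 2) ≤ N := by
      rw [← hsum (fun x y => ‖ψ x‖ ^ 2)]
      calc (∑ x ∈ F, ∑ _y ∈ F.filter fun y => dist x y ≤ R, ‖ψ x‖ ^ 2)
          = ∑ x ∈ F, (F.filter fun y => dist x y ≤ R).card * ‖ψ x‖ ^ 2 := by
            simp [Finset.sum_const, nsmul_eq_mul]
        _ ≤ ∑ x ∈ F, (N : ℝ) * ‖ψ x‖ ^ 2 := by
            apply Finset.sum_le_sum
            intro x hxF
            have h := hN x hxF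
            exact mul_le_mul_of_nonneg_right (by exact_mod_cast h) (sq_nonneg _)
        _ = N * ∑ x ∈ F, ‖ψ x‖ ^ 2 := by rw [Finset.mul_sum]
        _ = N := by rw [hψ, mul_one]
    have hy : (∑ p ∈ S, ‖ψ p.2‖ ^ 2) ≤ N := by
      -- symmetrize: swap coordinates via map
      have hswap : (∑ p ∈ S, ‖ψ p.2‖ ^ 2) = ∑ p ∈ S, ‖ψ p.1‖ ^ 2 := by
        apply Finset.sum_nbij' (fun p => (p.2, p.1)) (fun p => (p.2, p.1))
        · intro p hp
          simp only [hS, Finset.mem_filter, Finset.mem_product] at hp ⊢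
          exact ⟨⟨hp.1.2, hp.1.1⟩, by rw [dist_comm]; exact hp.2⟩
        · intro p hp
          simp only [hS, Finset.mem_filter, Finset.mem_product] at hp ⊢
          exact ⟨⟨hp.1.2, hp.1.1⟩, by rw [dist_comm]; exact hp.2⟩
        · intro p _; simp
        · intro p _; simp
        · intro p _; simp
      rw [hswap]; exact hx
    calc B ≤ ∑ p ∈ S, (2 * ‖ψ p.1‖ ^ 2 + 2 * ‖ψ p.2‖ ^ 2) := h1
      _ = 2 * (∑ p ∈ S, ‖ψ p.1‖ ^ 2) + 2 * (∑ p ∈ S, ‖ψ p.2‖ ^ 2) := by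
          rw [Finset.sum_add_distrib, Finset.mul_sum, Finset.mul_sum]
      _ ≤ 2 * N + 2 * N := by gcongr
      _ = 4 * N := by ring
  have hsqrtB : Real.sqrt B ≤ 2 * Real.sqrt N := by
    calc Real.sqrt B ≤ Real.sqrt (4 * N) := Real.sqrt_le_sqrt hB4N
      _ = 2 * Real.sqrt N := by
          rw [Real.sqrt_mul (by norm_num : (0:ℝ) ≤ 4)]
          rw [show (4:ℝ) = 2^2 by norm_num, Real.sqrt_sq (by norm_num : (0:ℝ) ≤ 2)]
  have hfin := step1.trans CS
  have h2 : Real.sqrt A * Real.sqrt B ≤ Real.sqrt A * (2 * Real.sqrt N) :=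
    mul_le_mul_of_nonneg_left hsqrtB (Real.sqrt_nonneg _)
  linarith
end
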